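/- arXiv:1209.0956 — 11 statements merged into one kernel-verified Lean document; each statement's English description precedes it below -/
import Mathlib

section
/- Let C ⊆ L⁰. The following are equivalent: (1) C is conditionally evenly convex; (2) C satisfies the countable concatenation property, and for every x ∈ L⁰ that is outside C there exists x′ ∈ L⁰ such that ξ·x′ < x·x′ a.e. on D_C for every ξ ∈ C. -/
open MeasureTheory

variable {Ω : Type*} [MeasurableSpace Ω]

/-- The countable concatenation property (CSet): for every countable measurable partition
`{A n}` of `Ω` and every sequence `{x n} ⊆ C`, the concatenation `∑ n, 1_{A n} • x n`
(i.e. the element `z ∈ L⁰` agreeing a.e. with `x n` on each `A n`) belongs to `C`. -/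
def CSet (μ : Measure Ω) (C : Set (Ω →ₘ[μ] ℝ)) : Prop :=
  ∀ A : ℕ → Set Ω, (∀ n, MeasurableSet (A n)) → Pairwise (Function.onFun Disjoint A) →
    (⋃ n, A n) = Set.univ →
    ∀ x : ℕ → Ω →ₘ[μ] ℝ, (∀ n, x n ∈ C) →
      ∀ z : Ω →ₘ[μ] ℝ, (∀ n, ∀ᵐ ω ∂μ, ω ∈ A n → z ω = x n ω) → z ∈ C

/-- The countable concatenation hull `C^cc` of `C`. -/
def ccHull (μ : Measure Ω) (C : Set (Ω →ₘ[μ] ℝ)) : Set (Ω →ₘ[μ] ℝ) :=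
  {z | ∃ (A : ℕ → Set Ω) (x : ℕ → Ω →ₘ[μ] ℝ),
    (∀ n, MeasurableSet (A n)) ∧ Pairwise (Function.onFun Disjoint A) ∧
    (⋃ n, A n) = Set.univ ∧ (∀ n, x n ∈ C) ∧
    ∀ n, ∀ᵐ ω ∂μ, ω ∈ A n → z ω = x n ω}

/-- `C 1_A = L⁰ 1_A`: every `x ∈ L⁰` agrees a.e. on `A` with some element of `C`. -/
def FullOn (μ : Measure Ω) (C : Set (Ω →ₘ[μ] ℝ)) (A : Set Ω) : Prop :=
  ∀ x : Ω →ₘ[μ] ℝ, ∃ ξ ∈ C, ∀ᵐ ω ∂μ, ω ∈ A → x ω = ξ ω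

/-- `A` is (a version of) the maximal set `A_C` of the class
`{A ∈ 𝒢 ∣ C 1_A = L⁰ 1_A}`; its complement `Aᶜ` is then `D_C`. -/
def IsMaxFull (μ : Measure Ω) (C : Set (Ω →ₘ[μ] ℝ)) (A : Set Ω) : Prop :=
  MeasurableSet A ∧ FullOn μ C A ∧
    ∀ B : Set Ω, MeasurableSet B → FullOn μ C B → μ (B \ A) = 0

/-- `x` is locally separated from `C` on `H`: for every `B ⊆ H` with `μ B > 0`
there is no `ξ ∈ C` with `x = ξ` a.e. on `B`.  With `H = D_C` this is the paper's
notion of `x` being outside `C`. -/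
def LocOutside (μ : Measure Ω) (C : Set (Ω →ₘ[μ] ℝ)) (x : Ω →ₘ[μ] ℝ) (H : Set Ω) : Prop :=
  ∀ B : Set Ω, MeasurableSet B → B ⊆ H → 0 < μ B →
    ¬ ∃ ξ ∈ C, ∀ᵐ ω ∂μ, ω ∈ B → x ω = ξ ω

/-- `H` is (a version of) the largest measurable set `H_{C,x}` on which `x` is locally
separated from `C`. -/
def IsMaxLocOutside (μ : Measure Ω) (C : Set (Ω →ₘ[μ] ℝ)) (x : Ω →ₘ[μ] ℝ) (H : Set Ω) : Prop :=
  MeasurableSet H ∧ LocOutside μ C x H ∧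
    ∀ B : Set Ω, MeasurableSet B → LocOutside μ C x B → μ (B \ H) = 0

/-- `C ⊆ L⁰` is conditionally evenly convex: there are a family `L ⊆ L⁰` and
`Y_{x'} ∈ L⁰` for each `x' ∈ L` with
`C = ⋂_{x' ∈ L} {x ∣ x·x' < Y_{x'} a.e. on D_C}` (where `D_C = Aᶜ` for the maximal
full set `A = A_C`; the case `L = ∅` gives `C = L⁰`). -/
def CondEvenlyConvex (μ : Measure Ω) (C : Set (Ω →ₘ[μ] ℝ)) : Prop :=
  ∃ A : Set Ω, IsMaxFull μ C A ∧
    ∃ (L : Set (Ω →ₘ[μ] ℝ)) (Y : (Ω →ₘ[μ] ℝ) → Ω →ₘ[μ] ℝ),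
      C = ⋂ x' ∈ L, {x : Ω →ₘ[μ] ℝ | ∀ᵐ ω ∂μ, ω ∈ Aᶜ → x ω * x' ω < Y x' ω}

/-- The polar `C°` of `C` (relative to `D = D_C`). -/
def polarSet (μ : Measure Ω) (C : Set (Ω →ₘ[μ] ℝ)) (D : Set Ω) : Set (Ω →ₘ[μ] ℝ) :=
  {x' | ∀ x ∈ C, ∀ᵐ ω ∂μ, ω ∈ D → x ω * x' ω < 1}

/-- The bipolar `C°°` of `C` (relative to `D = D_C`). -/
def bipolarSet (μ : Measure Ω) (C : Set (Ω →ₘ[μ] ℝ)) (D : Set Ω) : Set (Ω →ₘ[μ] ℝ) :=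
  {x | ∀ x' ∈ polarSet μ C D, ∀ᵐ ω ∂μ, ω ∈ D → x ω * x' ω < 1}

/-!
(1) ⇒ (2): a set `{x | x·x' < Y a.e. on D}` is stable under countable concatenation, and so is
any intersection of such sets. If `x` is outside `C`, an exhaustion argument covers `D_C` by the
sets on which `x` is strictly separated from `C`: on a non-null `F ⊆ D_C`, the concatenation of
`x` on `F` with an element of `C` violates one of the inequalities defining `C` on a non-null
subset of `F`, and that inequality separates `x` from `C` there.

(2) ⇒ (1): index the inequalities by all `w ∈ L⁰` and let `Y_w` be the a.e.-smallest
`{-1, 0, 1}`-valued strict upper bound of `C·w` on `D_C` (it minimises the integral). If `y ∉ C`,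
then `y` is outside `C` on a non-null `H ⊆ D_C`; extending `y|_H` by an element that is outside
`C` everywhere on `D_C` and applying (2) gives `x'` with `C·x' < y·x'` on `H`. A positive rescaling
`w` of `x'` turns `y·w` on `H` into a sign, which is then a strict upper bound of `C·w`, so
`y·w ≥ Y_w` on `H` and `y` violates the inequality indexed by `w`.
-/

open Set

section

variable {μ : Measure Ω}

lemma exists_aeEqFun_eq_on {ι : Type*} [Countable ι] [Nonempty ι] (B : ι → Set Ω)
    (hB : ∀ i, MeasurableSet (B i)) (hd : Pairwise (Function.onFun Disjoint B))
    (x : ι → Ω →ₘ[μ] ℝ) : ∃ z : Ω →ₘ[μ] ℝ, ∀ i, ∀ᵐ ω ∂μ, ω ∈ B i → z ω = x i ω := by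
  obtain ⟨f, hf, hfx⟩ := exists_measurable_piecewise B hB (fun i => x i)
    (fun i => (x i).measurable) fun i j hij ω hω => (Set.disjoint_iff.1 (hd hij) hω).elim
  refine ⟨AEEqFun.mk f hf.aestronglyMeasurable, fun i => ?_⟩
  filter_upwards [AEEqFun.coeFn_mk f hf.aestronglyMeasurable] with ω hω hmem
  rw [hω, hfx i hmem]

lemma exists_aeEqFun_eq_on_compl {H : Set Ω} (hH : MeasurableSet H) (x y : Ω →ₘ[μ] ℝ) :
    ∃ z : Ω →ₘ[μ] ℝ, (∀ᵐ ω ∂μ, ω ∈ H → z ω = x ω) ∧ ∀ᵐ ω ∂μ, ω ∈ Hᶜ → z ω = y ω := by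
  obtain ⟨z, hz⟩ := exists_aeEqFun_eq_on (fun b : Bool => bif b then H else Hᶜ)
    (fun b => by cases b <;> simp [hH, hH.compl])
    (pairwise_disjoint_on_bool.2 disjoint_compl_right) fun b => bif b then x else y
  exact ⟨z, hz true, hz false⟩

lemma exists_forall_measure_diff_eq_zero_of_iUnion_mem [IsFiniteMeasure μ] (P : Set Ω → Prop)
    (hmeas : ∀ B, P B → MeasurableSet B) (h0 : P ∅)
    (hU : ∀ B : ℕ → Set Ω, (∀ n, P (B n)) → P (⋃ n, B n)) :
    ∃ M, P M ∧ ∀ B, P B → μ (B \ M) = 0 := by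
  obtain ⟨u, -, hu, huS⟩ :=
    exists_seq_tendsto_sSup (⟨μ ∅, ∅, h0, rfl⟩ : (μ '' {B | P B}).Nonempty) (OrderTop.bddAbove _)
  choose B hB hBu using huS
  have hM : P (⋃ n, B n) := hU B hB
  have hsup : sSup (μ '' {B | P B}) ≤ μ (⋃ n, B n) :=
    le_of_tendsto' hu fun n => hBu n ▸ measure_mono (subset_iUnion B n)
  refine ⟨⋃ n, B n, hM, fun B' hB' => ?_⟩
  have hunion : P (B' ∪ ⋃ n, B n) := by
    have := hU (fun n => if n = 0 then B' else B (n - 1)) fun n => by split_ifs; exacts [hB', hB _]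
    rwa [← union_iUnion_nat_succ] at this
  have hle : μ (B' ∪ ⋃ n, B n) ≤ μ (⋃ n, B n) := (le_sSup (mem_image_of_mem μ hunion)).trans hsup
  rw [← union_sdiff_right, measure_sdiff subset_union_right
    (hmeas _ hM).nullMeasurableSet (measure_ne_top _ _)]
  exact tsub_eq_zero_of_le hle

lemma exists_measure_diff_eq_zero_of_forall_exists_subset [IsFiniteMeasure μ] {E : Set Ω}
    (hE : MeasurableSet E) (P : Set Ω → Prop) (hmeas : ∀ B, P B → MeasurableSet B) (h0 : P ∅)
    (hU : ∀ B : ℕ → Set Ω, (∀ n, P (B n)) → P (⋃ n, B n))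
    (hsub : ∀ F ⊆ E, MeasurableSet F → 0 < μ F → ∃ B ⊆ F, P B ∧ 0 < μ B) :
    ∃ G, P G ∧ μ (E \ G) = 0 := by
  obtain ⟨M, hM, hmax⟩ := exists_forall_measure_diff_eq_zero_of_iUnion_mem (μ := μ) P hmeas h0 hU
  refine ⟨M, hM, Classical.byContradiction fun h => ?_⟩
  obtain ⟨B, hBF, hB, hBpos⟩ :=
    hsub (E \ M) sdiff_subset (hE.diff (hmeas M hM)) (pos_iff_ne_zero.2 h)
  exact hBpos.ne' (measure_mono_null (fun ω (hω : ω ∈ B) => (⟨hω, (hBF hω).2⟩ : ω ∈ B \ M))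
    (hmax B hB))

variable {C : Set (Ω →ₘ[μ] ℝ)} {x y : Ω →ₘ[μ] ℝ} {H K : Set Ω}

lemma LocOutside.mono (hx : LocOutside μ C x H) (hKH : K ⊆ H) : LocOutside μ C x K :=
  fun B hB hBK => hx B hB (hBK.trans hKH)

lemma LocOutside.congr (hx : LocOutside μ C x H) (hyx : ∀ᵐ ω ∂μ, ω ∈ H → y ω = x ω) :
    LocOutside μ C y H := by
  rintro B hB hBH hpos ⟨ξ, hξ, hyξ⟩
  refine hx B hB hBH hpos ⟨ξ, hξ, ?_⟩
  filter_upwards [hyx, hyξ] with ω h1 h2 hω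
  rw [← h1 (hBH hω), h2 hω]

lemma LocOutside.measure_eq_zero (hx : LocOutside μ C x H) {B : Set Ω} (hB : MeasurableSet B)
    (hBH : B ⊆ H) {ξ : Ω →ₘ[μ] ℝ} (hξ : ξ ∈ C) (hxξ : ∀ᵐ ω ∂μ, ω ∈ B → x ω = ξ ω) : μ B = 0 :=
  Classical.byContradiction fun h => hx B hB hBH (pos_iff_ne_zero.2 h) ⟨ξ, hξ, hxξ⟩

lemma locOutside_of_measure_eq_zero (hH : μ H = 0) : LocOutside μ C x H :=
  fun _ _ hBH hpos _ => hpos.ne' (measure_mono_null hBH hH)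

lemma LocOutside.iUnion {ι : Type*} [Countable ι] {H : ι → Set Ω}
    (hH : ∀ i, MeasurableSet (H i)) (hx : ∀ i, LocOutside μ C x (H i)) :
    LocOutside μ C x (⋃ i, H i) := by
  rintro B hB hBH hpos ⟨ξ, hξ, hxξ⟩
  obtain ⟨i, hi⟩ : ∃ i, μ (B ∩ H i) ≠ 0 := by
    by_contra! h
    refine hpos.ne' (measure_mono_null ?_ (measure_iUnion_null h))
    rw [← inter_iUnion]
    exact subset_inter subset_rfl hBH
  refine hx i (B ∩ H i) (hB.inter (hH i)) inter_subset_right (pos_iff_ne_zero.2 hi) ⟨ξ, hξ, ?_⟩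
  filter_upwards [hxξ] with ω h hω using h hω.1

lemma LocOutside.union (hH : MeasurableSet H) (hK : MeasurableSet K) (hxH : LocOutside μ C x H)
    (hxK : LocOutside μ C x K) : LocOutside μ C x (H ∪ K) := by
  rw [union_eq_iUnion]
  exact LocOutside.iUnion (fun b => by cases b <;> assumption) fun b => by cases b <;> assumption

lemma LocOutside.of_measure_diff_eq_zero (hx : LocOutside μ C x H) (hH : MeasurableSet H)
    (hK : MeasurableSet K) (hKH : μ (K \ H) = 0) : LocOutside μ C x K :=
  (hx.union hH (hK.diff hH) (locOutside_of_measure_eq_zero hKH)).mono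
    (sdiff_subset_iff.1 subset_rfl)

lemma cSet_setOf_ae (p : Ω → ℝ → Prop) : CSet μ {x : Ω →ₘ[μ] ℝ | ∀ᵐ ω ∂μ, p ω (x ω)} := by
  intro A _ _ hcover x hx z hz
  filter_upwards [ae_all_iff.2 hz, ae_all_iff.2 hx] with ω hzω hxω
  obtain ⟨n, hn⟩ := mem_iUnion.1 (hcover ▸ mem_univ ω)
  simpa [hzω n hn] using hxω n

lemma CSet.biInter {ι : Type*} (L : Set ι) {S : ι → Set (Ω →ₘ[μ] ℝ)}
    (hS : ∀ i ∈ L, CSet μ (S i)) : CSet μ (⋂ i ∈ L, S i) :=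
  fun A hA hd hcover x hx z hz => mem_iInter₂.2 fun i hi =>
    hS i hi A hA hd hcover x (fun n => mem_iInter₂.1 (hx n) i hi) z hz

lemma CSet.exists_mem_eq_on_iUnion (hC : CSet μ C) {ξ₀ : Ω →ₘ[μ] ℝ} (hξ₀ : ξ₀ ∈ C)
    {B : ℕ → Set Ω} (hB : ∀ n, MeasurableSet (B n)) {ξ : ℕ → Ω →ₘ[μ] ℝ} (hξ : ∀ n, ξ n ∈ C)
    (hxξ : ∀ n, ∀ᵐ ω ∂μ, ω ∈ B n → x ω = ξ n ω) :
    ∃ ζ ∈ C, ∀ᵐ ω ∂μ, ω ∈ ⋃ n, B n → x ω = ζ ω := by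
  set B' : ℕ → Set Ω := fun k => if k = 0 then (⋃ n, B n)ᶜ else B (k - 1)
  set ξ' : ℕ → Ω →ₘ[μ] ℝ := fun k => if k = 0 then ξ₀ else ξ (k - 1)
  have hB'succ : ∀ n, B' (n + 1) = B n := fun n => by simp [B']
  have hB' : ∀ k, MeasurableSet (B' k) := fun k => by
    unfold B'
    split_ifs
    exacts [(MeasurableSet.iUnion hB).compl, hB _]
  have hcover : ⋃ k, disjointed B' k = univ := by
    rw [iUnion_disjointed, ← union_iUnion_nat_succ]
    simp_rw [hB'succ]
    exact compl_union_self _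
  obtain ⟨ζ, hζ⟩ := exists_aeEqFun_eq_on (disjointed B') (MeasurableSet.disjointed hB')
    (disjoint_disjointed B') ξ'
  refine ⟨ζ, hC _ (MeasurableSet.disjointed hB') (disjoint_disjointed B') hcover ξ'
    (fun k => by by_cases hk : k = 0 <;> simp [ξ', hk, hξ₀, hξ]) ζ hζ, ?_⟩
  filter_upwards [ae_all_iff.2 hζ, ae_all_iff.2 hxξ] with ω hζω hxω hω
  obtain ⟨k, hk⟩ := mem_iUnion.1 (hcover ▸ mem_univ ω)
  have hωk := disjointed_subset B' k hk
  cases k with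
  | zero => exact absurd hω (by simpa [B'] using hωk)
  | succ n => simpa [hζω _ hk, ξ'] using hxω n (by simpa [B'] using hωk)

lemma CSet.exists_locOutside_compl (hC : CSet μ C) (hne : C.Nonempty) [IsFiniteMeasure μ]
    (x : Ω →ₘ[μ] ℝ) :
    ∃ M, MeasurableSet M ∧ (∃ ξ ∈ C, ∀ᵐ ω ∂μ, ω ∈ M → x ω = ξ ω) ∧ LocOutside μ C x Mᶜ := by
  obtain ⟨ξ₀, hξ₀⟩ := hne
  obtain ⟨M, ⟨hM, hagree⟩, hmax⟩ := exists_forall_measure_diff_eq_zero_of_iUnion_mem (μ := μ)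
    (fun B => MeasurableSet B ∧ ∃ ξ ∈ C, ∀ᵐ ω ∂μ, ω ∈ B → x ω = ξ ω) (fun _ h => h.1)
    ⟨MeasurableSet.empty, ξ₀, hξ₀, by simp⟩ fun B hB => by
      choose hBm ξ hξ hxξ using hB
      exact ⟨MeasurableSet.iUnion hBm, hC.exists_mem_eq_on_iUnion hξ₀ hBm hξ hxξ⟩
  exact ⟨M, hM, hagree, fun B hB hBM hpos ⟨ξ, hξ, h⟩ =>
    hpos.ne' (measure_mono_null (fun ω (hω : ω ∈ B) => (⟨hω, hBM hω⟩ : ω ∈ B \ M))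
      (hmax B ⟨hB, ξ, hξ, h⟩))⟩

variable {A : Set Ω}

lemma IsMaxFull.nonempty (hA : IsMaxFull μ C A) : C.Nonempty :=
  let ⟨ξ, hξ, _⟩ := hA.2.1 0
  ⟨ξ, hξ⟩

lemma IsMaxFull.exists_locOutside_subset [IsFiniteMeasure μ] (hA : IsMaxFull μ C A)
    (hC : CSet μ C) {E : Set Ω} (hE : MeasurableSet E) (hEA : E ⊆ Aᶜ) (hpos : 0 < μ E) :
    ∃ F ⊆ E, MeasurableSet F ∧ 0 < μ F ∧ ∃ y, LocOutside μ C y F := by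
  have hnotFull : ¬ FullOn μ C E := fun hfull =>
    hpos.ne' (measure_mono_null (fun ω (hω : ω ∈ E) => (⟨hω, hEA hω⟩ : ω ∈ E \ A))
      (hA.2.2 E hE hfull))
  obtain ⟨y, hy⟩ : ∃ y : Ω →ₘ[μ] ℝ, ∀ ξ ∈ C, ¬ ∀ᵐ ω ∂μ, ω ∈ E → y ω = ξ ω := by
    simpa [FullOn] using hnotFull
  obtain ⟨M, hM, ⟨ξ, hξ, hyξ⟩, hyM⟩ := hC.exists_locOutside_compl hA.nonempty y
  refine ⟨E \ M, sdiff_subset, hE.diff hM, pos_iff_ne_zero.2 fun h => hy ξ hξ ?_,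
    y, hyM.mono fun ω hω => hω.2⟩
  filter_upwards [hyξ, measure_eq_zero_iff_ae_notMem.1 h] with ω h1 h2 hω
  exact h1 (Classical.byContradiction fun hωM => h2 ⟨hω, hωM⟩)

lemma IsMaxFull.exists_locOutside [IsFiniteMeasure μ] (hA : IsMaxFull μ C A) (hC : CSet μ C) :
    ∃ z, LocOutside μ C z Aᶜ := by
  obtain ⟨G, ⟨hG, z, hz⟩, hAG⟩ := exists_measure_diff_eq_zero_of_forall_exists_subset hA.1.compl
    (fun H => MeasurableSet H ∧ ∃ z, LocOutside μ C z H) (fun _ h => h.1)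
    ⟨MeasurableSet.empty, 0, locOutside_of_measure_eq_zero measure_empty⟩
    (fun B hB => by
      choose hBm w hw using hB
      obtain ⟨z, hz⟩ := exists_aeEqFun_eq_on (disjointed B) (MeasurableSet.disjointed hBm)
        (disjoint_disjointed B) w
      refine ⟨MeasurableSet.iUnion hBm, z, ?_⟩
      rw [← iUnion_disjointed]
      exact LocOutside.iUnion (MeasurableSet.disjointed hBm) fun n =>
        ((hw n).mono (disjointed_subset B n)).congr (hz n))
    fun F hFA hF hpos => by
      obtain ⟨F', hF'F, hF', hpos', hy⟩ := hA.exists_locOutside_subset hC hF hFA hpos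
      exact ⟨F', hF'F, ⟨hF', hy⟩, hpos'⟩
  exact ⟨z, hz.of_measure_diff_eq_zero hG hA.1.compl hAG⟩

lemma IsMaxFull.exists_locOutside_eq_on_of_notMem [IsFiniteMeasure μ] (hA : IsMaxFull μ C A)
    (hC : CSet μ C) (hy : y ∉ C) :
    ∃ H ⊆ Aᶜ, MeasurableSet H ∧ 0 < μ H ∧
      ∃ v, LocOutside μ C v Aᶜ ∧ ∀ᵐ ω ∂μ, ω ∈ H → v ω = y ω := by
  obtain ⟨M, hM, ⟨ξ, hξ, hyξ⟩, hyM⟩ := hC.exists_locOutside_compl hA.nonempty y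
  have hH : MeasurableSet (Aᶜ \ M) := hA.1.compl.diff hM
  have hpos : 0 < μ (Aᶜ \ M) := by
    refine pos_iff_ne_zero.2 fun h => hy ?_
    obtain ⟨ξA, hξA, hyξA⟩ := hA.2.1 y
    have hAM : μ (A \ M) = 0 :=
      hyM.measure_eq_zero (hA.1.diff hM) (fun ω hω => hω.2) hξA
        (by filter_upwards [hyξA] with ω h hω using h hω.1)
    have hMc : ∀ᵐ ω ∂μ, ω ∈ M := by
      refine measure_mono_null (fun ω hω => ?_) (measure_union_null hAM h)
      by_cases hωA : ω ∈ A
      exacts [Or.inl ⟨hωA, hω⟩, Or.inr ⟨hωA, hω⟩]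
    have : y = ξ := AEEqFun.ext (by filter_upwards [hyξ, hMc] with ω h1 h2 using h1 h2)
    exact this ▸ hξ
  obtain ⟨z, hz⟩ := hA.exists_locOutside hC
  obtain ⟨v, hvy, hvz⟩ := exists_aeEqFun_eq_on_compl hH y z
  refine ⟨Aᶜ \ M, sdiff_subset, hH, hpos, v, ?_, hvy⟩
  have hvH : LocOutside μ C v (Aᶜ \ M) := (hyM.mono fun ω hω => hω.2).congr hvy
  have hvH' : LocOutside μ C v (Aᶜ \ (Aᶜ \ M)) :=
    (hz.mono sdiff_subset).congr (by filter_upwards [hvz] with ω h hω using h hω.2)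
  exact (hvH.union hH (hA.1.compl.diff hH) hvH').mono (sdiff_subset_iff.1 subset_rfl)

def StrictlySeparatedOn (μ : Measure Ω) (C : Set (Ω →ₘ[μ] ℝ)) (x : Ω →ₘ[μ] ℝ) (F : Set Ω) :
    Prop :=
  ∃ x' : Ω →ₘ[μ] ℝ, ∀ ξ ∈ C, ∀ᵐ ω ∂μ, ω ∈ F → ξ ω * x' ω < x ω * x' ω

lemma StrictlySeparatedOn.iUnion {B : ℕ → Set Ω} (hB : ∀ n, MeasurableSet (B n))
    (hx : ∀ n, StrictlySeparatedOn μ C x (B n)) : StrictlySeparatedOn μ C x (⋃ n, B n) := by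
  choose x' hx' using hx
  obtain ⟨v, hv⟩ := exists_aeEqFun_eq_on (disjointed B) (MeasurableSet.disjointed hB)
    (disjoint_disjointed B) x'
  refine ⟨v, fun ξ hξ => ?_⟩
  filter_upwards [ae_all_iff.2 hv, ae_all_iff.2 fun n => hx' n ξ hξ] with ω h1 h2 hω
  obtain ⟨n, hn⟩ := mem_iUnion.1 (iUnion_disjointed (f := B) ▸ hω)
  rw [h1 n hn]
  exact h2 n (disjointed_subset B n hn)

lemma StrictlySeparatedOn.of_measure_diff_eq_zero (hx : StrictlySeparatedOn μ C x H)
    (hKH : μ (K \ H) = 0) : StrictlySeparatedOn μ C x K := by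
  obtain ⟨x', hx'⟩ := hx
  refine ⟨x', fun ξ hξ => ?_⟩
  filter_upwards [hx' ξ hξ, measure_eq_zero_iff_ae_notMem.1 hKH] with ω h1 h2 hω
  exact h1 (Classical.byContradiction fun hωH => h2 ⟨hω, hωH⟩)

section Halfspaces

variable {ι : Type*} {L : Set ι} {D : Set Ω} {a : ι → Ω →ₘ[μ] ℝ} {Y : ι → Ω →ₘ[μ] ℝ}
  (hCeq : C = ⋂ i ∈ L, {x : Ω →ₘ[μ] ℝ | ∀ᵐ ω ∂μ, ω ∈ D → x ω * a i ω < Y i ω})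
include hCeq

lemma exists_subset_strictlySeparatedOn_of_eq_biInter (hD : MeasurableSet D)
    {ξ₀ : Ω →ₘ[μ] ℝ} (hξ₀ : ξ₀ ∈ C) {F : Set Ω} (hF : MeasurableSet F) (hpos : 0 < μ F)
    (hx : LocOutside μ C x F) :
    ∃ N ⊆ F, MeasurableSet N ∧ 0 < μ N ∧ StrictlySeparatedOn μ C x N := by
  have hmemC : ∀ ξ ∈ C, ∀ i ∈ L, ∀ᵐ ω ∂μ, ω ∈ D → ξ ω * a i ω < Y i ω := by
    intro ξ hξ
    rw [hCeq] at hξ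
    exact fun i hi => mem_iInter₂.1 hξ i hi
  obtain ⟨v, hvF, hvFc⟩ := exists_aeEqFun_eq_on_compl hF x ξ₀
  have hvC : v ∉ C := fun hv => hx F hF subset_rfl hpos
    ⟨v, hv, by filter_upwards [hvF] with ω h hω using (h hω).symm⟩
  obtain ⟨i, hi, hfail⟩ : ∃ i ∈ L, ¬ ∀ᵐ ω ∂μ, ω ∈ D → v ω * a i ω < Y i ω := by
    by_contra! h
    exact hvC (hCeq ▸ mem_iInter₂.2 h)
  set N := D ∩ {ω | Y i ω ≤ v ω * a i ω}
  have hN : MeasurableSet N :=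
    hD.inter (measurableSet_le (Y i).measurable (v.measurable.mul (a i).measurable))
  have hNpos : μ N ≠ 0 := by
    rw [ae_iff] at hfail
    convert hfail using 2
    ext ω
    simp [N, not_lt]
  -- `N ⊆ F` up to a null set, because `v = ξ₀ ∈ C` off `F`
  have hNF : μ (N \ F) = 0 := by
    refine measure_eq_zero_iff_ae_notMem.2 ?_
    filter_upwards [hmemC ξ₀ hξ₀ i hi, hvFc] with ω h1 h2
    rintro ⟨⟨hωD, hle⟩, hωF⟩
    exact (h1 hωD).not_ge (h2 hωF ▸ hle)
  refine ⟨N ∩ F, inter_subset_right, hN.inter hF, ?_, a i, fun ξ hξ => ?_⟩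
  · rwa [← measure_inter_add_sdiff N hF, hNF, add_zero, ← pos_iff_ne_zero] at hNpos
  · filter_upwards [hmemC ξ hξ i hi, hvF] with ω h1 h2 hω
    calc ξ ω * a i ω < Y i ω := h1 hω.1.1
      _ ≤ v ω * a i ω := hω.1.2
      _ = x ω * a i ω := by rw [h2 hω.2]

lemma strictlySeparatedOn_of_eq_biInter [IsFiniteMeasure μ] (hD : MeasurableSet D)
    (hne : C.Nonempty) {E : Set Ω} (hE : MeasurableSet E) (hx : LocOutside μ C x E) :
    StrictlySeparatedOn μ C x E := by
  obtain ⟨ξ₀, hξ₀⟩ := hne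
  obtain ⟨G, ⟨-, hG⟩, hEG⟩ := exists_measure_diff_eq_zero_of_forall_exists_subset hE
    (fun F => MeasurableSet F ∧ StrictlySeparatedOn μ C x F) (fun _ h => h.1)
    ⟨MeasurableSet.empty, 0, fun _ _ => by simp⟩
    (fun B hB => ⟨MeasurableSet.iUnion fun n => (hB n).1,
      StrictlySeparatedOn.iUnion (fun n => (hB n).1) fun n => (hB n).2⟩)
    fun F hFE hF hpos => by
      obtain ⟨N, hNF, hN, hNpos, hsep⟩ :=
        exists_subset_strictlySeparatedOn_of_eq_biInter hCeq hD hξ₀ hF hpos (hx.mono hFE)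
      exact ⟨N, hNF, ⟨hN, hsep⟩, hNpos⟩
  exact hG.of_measure_diff_eq_zero hEG

end Halfspaces

/-- The values are confined to `{-1, 0, 1}` so that countable infima of such bounds are attained
pointwise, hence remain strict bounds. -/
def IsSignThreshold (μ : Measure Ω) (C : Set (Ω →ₘ[μ] ℝ)) (D : Set Ω) (w t : Ω →ₘ[μ] ℝ) :
    Prop :=
  (∀ᵐ ω ∂μ, t ω ∈ ({-1, 0, 1} : Set ℝ)) ∧ ∀ ξ ∈ C, ∀ᵐ ω ∂μ, ω ∈ D → ξ ω * w ω < t ω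

lemma exists_aeEqFun_forall_le_of_seq {S : Set (Ω →ₘ[μ] ℝ)} (hne : S.Nonempty)
    (hint : ∀ t ∈ S, Integrable t μ)
    (hbdd : BddBelow ((fun t : Ω →ₘ[μ] ℝ => ∫ ω, t ω ∂μ) '' S))
    (hlow : ∀ t : ℕ → Ω →ₘ[μ] ℝ, (∀ n, t n ∈ S) → ∃ s ∈ S, ∀ n, s ≤ t n) :
    ∃ t₀ ∈ S, ∀ t ∈ S, t₀ ≤ t := by
  set I := fun t : Ω →ₘ[μ] ℝ => ∫ ω, t ω ∂μ
  have hmono : ∀ s ∈ S, ∀ t ∈ S, s ≤ t → I s ≤ I t := fun s hs t ht hst =>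
    integral_mono_ae (hint s hs) (hint t ht) (AEEqFun.coeFn_le.2 hst)
  obtain ⟨u, -, hu, huS⟩ := exists_seq_tendsto_sInf (hne.image I) hbdd
  choose t ht hIt using huS
  obtain ⟨t₀, ht₀, ht₀le⟩ := hlow t ht
  have hI₀ : I t₀ ≤ sInf (I '' S) :=
    ge_of_tendsto' hu fun n => hIt n ▸ hmono t₀ ht₀ (t n) (ht n) (ht₀le n)
  refine ⟨t₀, ht₀, fun s hs => ?_⟩
  obtain ⟨m, hm, hmle⟩ := hlow (fun n => if n = 0 then s else t₀)
    fun n => by split_ifs <;> assumption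
  have hm₀ : m ≤ t₀ := by simpa using hmle 1
  have hmt₀ : m = t₀ := AEEqFun.ext <|
    (integral_eq_iff_of_ae_le (hint m hm) (hint t₀ ht₀) (AEEqFun.coeFn_le.2 hm₀)).1 <|
      le_antisymm (hmono m hm t₀ ht₀ hm₀) (hI₀.trans (csInf_le hbdd ⟨m, hm, rfl⟩))
  simpa [hmt₀] using hmle 0

variable {D : Set Ω} {w : Ω →ₘ[μ] ℝ}

lemma IsSignThreshold.abs_le_one {t : Ω →ₘ[μ] ℝ} (ht : IsSignThreshold μ C D w t) :
    ∀ᵐ ω ∂μ, |t ω| ≤ 1 := by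
  filter_upwards [ht.1] with ω hω
  rcases hω with h | h | h <;> simp_all

lemma IsSignThreshold.exists_le_seq {t : ℕ → Ω →ₘ[μ] ℝ}
    (ht : ∀ n, IsSignThreshold μ C D w (t n)) :
    ∃ s, IsSignThreshold μ C D w s ∧ ∀ n, s ≤ t n := by
  have hf : Measurable fun ω => ⨅ n, t n ω := Measurable.iInf fun n => (t n).measurable
  have hinf : ∀ ω, (∀ n, t n ω ∈ ({-1, 0, 1} : Set ℝ)) →
      (∃ m, ⨅ n, t n ω = t m ω) ∧ ∀ n, ⨅ n, t n ω ≤ t n ω := fun ω hω => by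
    have hfin : (range fun n => t n ω).Finite := (toFinite _).subset (range_subset_iff.2 hω)
    obtain ⟨m, hm⟩ := (range_nonempty _).csInf_mem hfin
    exact ⟨⟨m, hm.symm⟩, fun n => ciInf_le hfin.bddBelow n⟩
  have hvals := ae_all_iff.2 fun n => (ht n).1
  have hs := AEEqFun.coeFn_mk (μ := μ) _ hf.aestronglyMeasurable
  refine ⟨AEEqFun.mk _ hf.aestronglyMeasurable, ⟨?_, fun ξ hξ => ?_⟩, fun n => ?_⟩
  · filter_upwards [hs, hvals] with ω h1 h2
    obtain ⟨m, hm⟩ := (hinf ω h2).1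
    exact h1 ▸ hm ▸ h2 m
  · filter_upwards [hs, hvals, ae_all_iff.2 fun n => (ht n).2 ξ hξ] with ω h1 h2 h3 hω
    obtain ⟨m, hm⟩ := (hinf ω h2).1
    exact h1 ▸ hm ▸ h3 m hω
  · refine AEEqFun.coeFn_le.1 ?_
    filter_upwards [hs, hvals] with ω h1 h2
    exact h1 ▸ (hinf ω h2).2 n

lemma exists_isSignThreshold_forall_le [IsFiniteMeasure μ] (w : Ω →ₘ[μ] ℝ) :
    ∃ t₀, ∀ t, IsSignThreshold μ C D w t → IsSignThreshold μ C D w t₀ ∧ t₀ ≤ t := by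
  by_cases hne : ∃ t, IsSignThreshold μ C D w t
  swap
  · exact ⟨0, fun t ht => absurd ⟨t, ht⟩ hne⟩
  obtain ⟨t₀, ht₀, hmin⟩ := exists_aeEqFun_forall_le_of_seq (S := {t | IsSignThreshold μ C D w t})
    hne (fun t ht => Integrable.of_bound t.aestronglyMeasurable 1 ht.abs_le_one)
    ⟨∫ _, (-1 : ℝ) ∂μ, forall_mem_image.2 fun t ht => integral_mono_ae (integrable_const _)
      (Integrable.of_bound t.aestronglyMeasurable 1 ht.abs_le_one)
      (by filter_upwards [ht.abs_le_one] with ω h using (abs_le.1 h).1)⟩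
    fun t ht => IsSignThreshold.exists_le_seq ht
  exact ⟨t₀, fun t ht => ⟨ht₀, hmin t ht⟩⟩

noncomputable def signScale (r : ℝ) : ℝ := if r = 0 then 1 else |r|⁻¹

lemma signScale_pos (r : ℝ) : 0 < signScale r := by
  unfold signScale
  split_ifs with h
  exacts [one_pos, inv_pos.2 (abs_pos.2 h)]

lemma signScale_mul_self (r : ℝ) : signScale r * r = Real.sign r := by
  unfold signScale
  rcases lt_trichotomy r 0 with h | rfl | h
  · rw [if_neg h.ne, Real.sign_of_neg h, abs_of_neg h, inv_neg, neg_mul, inv_mul_cancel₀ h.ne]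
  · simp
  · rw [if_neg h.ne', Real.sign_of_pos h, abs_of_pos h, inv_mul_cancel₀ h.ne']

lemma measurable_signScale : Measurable signScale :=
  Measurable.ite (measurableSet_singleton 0) measurable_const measurable_abs.inv

lemma StrictlySeparatedOn.exists_isSignThreshold {v : Ω →ₘ[μ] ℝ}
    (hv : StrictlySeparatedOn μ C v D) :
    ∃ w t, IsSignThreshold μ C D w t ∧ ∀ᵐ ω ∂μ, v ω * w ω = t ω := by
  obtain ⟨x', hsep⟩ := hv
  set p : Ω → ℝ := fun ω => v ω * x' ω
  have hc : Measurable fun ω => signScale (p ω) :=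
    measurable_signScale.comp (v.measurable.mul x'.measurable)
  have hcx' : Measurable fun ω => signScale (p ω) * x' ω := hc.mul x'.measurable
  have hcp : Measurable fun ω => signScale (p ω) * p ω := hc.mul (v.measurable.mul x'.measurable)
  have hw := AEEqFun.coeFn_mk (μ := μ) _ hcx'.aestronglyMeasurable
  have ht := AEEqFun.coeFn_mk (μ := μ) _ hcp.aestronglyMeasurable
  refine ⟨AEEqFun.mk _ hcx'.aestronglyMeasurable, AEEqFun.mk _ hcp.aestronglyMeasurable,
    ⟨?_, fun ξ hξ => ?_⟩, ?_⟩
  · filter_upwards [ht] with ω h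
    rw [h, signScale_mul_self]
    rcases Real.sign_apply_eq (p ω) with h | h | h <;> simp [h]
  · filter_upwards [hsep ξ hξ, hw, ht] with ω h1 h2 h3 hω
    rw [h2, h3, mul_left_comm]
    exact mul_lt_mul_of_pos_left (h1 hω) (signScale_pos _)
  · filter_upwards [hw, ht] with ω h1 h2
    rw [h1, h2, mul_left_comm]

end

/-- **Theorem (characterization of conditionally evenly convex sets).**
Let `C ⊆ L⁰` and let `A` be the maximal set `A_C` (so `Aᶜ = D_C`).  The following
are equivalent: (1) `C` is conditionally evenly convex; (2) `C` satisfies the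
countable concatenation property, and for every `x` outside `C` there exists
`x' ∈ L⁰` such that `ξ·x' < x·x'` a.e. on `D_C` for every `ξ ∈ C`. -/
theorem stmt0 (μ : Measure Ω) [IsProbabilityMeasure μ]
    (C : Set (Ω →ₘ[μ] ℝ)) (A : Set Ω) (hA : IsMaxFull μ C A) :
    CondEvenlyConvex μ C ↔
      (CSet μ C ∧
        ∀ x : Ω →ₘ[μ] ℝ, LocOutside μ C x Aᶜ →
          ∃ x' : Ω →ₘ[μ] ℝ, ∀ ξ ∈ C,
            ∀ᵐ ω ∂μ, ω ∈ Aᶜ → ξ ω * x' ω < x ω * x' ω) := by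
  constructor
  · rintro ⟨A', hA', L, Y, hCeq⟩
    refine ⟨hCeq ▸ CSet.biInter L fun x' _ =>
      cSet_setOf_ae fun ω r => ω ∈ A'ᶜ → r * x' ω < Y x' ω, fun x hx => ?_⟩
    exact strictlySeparatedOn_of_eq_biInter (a := id) hCeq hA'.1.compl hA.nonempty hA.1.compl hx
  · rintro ⟨hC, hsep⟩
    choose Y hY using exists_isSignThreshold_forall_le (C := C) (D := Aᶜ)
    refine ⟨A, hA, {w | ∃ t, IsSignThreshold μ C Aᶜ w t}, Y, Subset.antisymm
      (fun ξ hξ => mem_iInter₂.2 fun w ⟨t, ht⟩ => (hY w t ht).1.2 ξ hξ) fun y hy => ?_⟩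
    by_contra hyC
    obtain ⟨H, hHA, -, hHpos, v, hv, hvy⟩ := hA.exists_locOutside_eq_on_of_notMem hC hyC
    obtain ⟨w, t, hwt, hvw⟩ := StrictlySeparatedOn.exists_isSignThreshold (hsep v hv)
    refine hHpos.ne' (measure_eq_zero_iff_ae_notMem.2 ?_)
    filter_upwards [mem_iInter₂.1 hy w ⟨t, hwt⟩, AEEqFun.coeFn_le.2 (hY w t hwt).2, hvw, hvy]
      with ω hyY hYt hvt hvy hωH
    have := hyY (hHA hωH)
    rw [← hvy hωH] at this
    linarith [hYt]
end

section
/- Let C ⊆ L⁰ with 0 ∈ C. Then the polar satisfies C° = {x′ ∈ L⁰ : x·x′ < 1 a.e. on D_C for all x ∈ C^cc}, where C^cc is the countable concatenation hull of C. -/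
open MeasureTheory

variable {Ω : Type*} [MeasurableSpace Ω]

/-- **Bipolar theorem, part 1.**  Let `C ⊆ L⁰` with `0 ∈ C`, and let `A` be the
maximal set `A_C` (so `Aᶜ = D_C`).  Then
`C° = {x' ∈ L⁰ ∣ x·x' < 1 a.e. on D_C for all x ∈ C^cc}`. -/
theorem stmt1 (μ : Measure Ω) [IsProbabilityMeasure μ]
    (C : Set (Ω →ₘ[μ] ℝ)) (h0 : (0 : Ω →ₘ[μ] ℝ) ∈ C)
    (A : Set Ω) (hA : IsMaxFull μ C A) :
    polarSet μ C Aᶜ =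
      {x' : Ω →ₘ[μ] ℝ | ∀ x ∈ ccHull μ C, ∀ᵐ ω ∂μ, ω ∈ Aᶜ → x ω * x' ω < 1} := by
  ext x'
  constructor
  · intro hx' z hz
    obtain ⟨P, x, hPm, hPd, hPu, hxC, hzx⟩ := hz
    have h1 : ∀ᵐ ω ∂μ, ∀ n, ω ∈ P n → z ω = x n ω := (ae_all_iff).2 hzx
    have h2 : ∀ᵐ ω ∂μ, ∀ n, ω ∈ Aᶜ → x n ω * x' ω < 1 :=
      (ae_all_iff).2 fun n => hx' (x n) (hxC n)
    filter_upwards [h1, h2] with ω hω1 hω2 hωA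
    have : ω ∈ ⋃ n, P n := hPu ▸ Set.mem_univ ω
    obtain ⟨n, hn⟩ := Set.mem_iUnion.1 this
    rw [hω1 n hn]
    exact hω2 n hωA
  · intro hx' z hzC
    apply hx'
    refine ⟨fun n => if n = 0 then Set.univ else ∅, fun _ => z, ?_, ?_, ?_, fun _ => hzC, ?_⟩
    · intro n; by_cases h : n = 0 <;> simp [h]
    · intro m n hmn
      rcases Nat.eq_zero_or_pos m with hm | hm
      · have : n ≠ 0 := by omega
        simp [Function.onFun, hm, this]
      · have : m ≠ 0 := by omega
        simp [Function.onFun, this]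
    · ext ω; simp only [Set.mem_iUnion, Set.mem_univ, iff_true]; exact ⟨0, by simp⟩
    · intro n; filter_upwards with ω _; rfl
end

section
/- Let C ⊆ L⁰ with 0 ∈ C. Then: (1) the bipolar C°° is a conditionally evenly convex set containing C; (2) C is conditionally evenly convex if and only if C = C°°. -/
open MeasureTheory

variable {Ω : Type*} [MeasurableSpace Ω]

/-! The bipolar is stable under countable concatenation, so the sets on which it is full are
closed under countable unions; exhausting the finite measure produces its maximal full set `A'`,
and relative to `A'ᶜ` the bipolar is the intersection of the half-spaces `{x ∣ x·x' < 1}`,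
`x' ∈ C°`. Conversely, if `C = ⋂ {x ∣ x·x' < Y_{x'}}`, then `0 ∈ C` forces `Y_{x'} > 0` on `D_C`,
so `x' / Y_{x'} ∈ C°`, and testing `x ∈ C°°` against it gives `x·x' < Y_{x'}`. -/

variable {μ : Measure Ω}

theorem ae_imp_of_ae_le {S T : Set Ω} {p : Ω → Prop} (h : ∀ᵐ ω ∂μ, ω ∈ S → p ω)
    (hTS : T ≤ᵐ[μ] S) : ∀ᵐ ω ∂μ, ω ∈ T → p ω := by
  filter_upwards [h, hTS] with ω hS hT using fun hω => hS (hT hω)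

theorem ae_imp_congr_set {S T : Set Ω} {p : Ω → Prop} (hST : S =ᵐ[μ] T) :
    (∀ᵐ ω ∂μ, ω ∈ S → p ω) ↔ ∀ᵐ ω ∂μ, ω ∈ T → p ω :=
  ⟨fun h => ae_imp_of_ae_le h hST.symm.le, fun h => ae_imp_of_ae_le h hST.le⟩

theorem exists_ae_maximal_of_iUnion [IsFiniteMeasure μ] (p : Set Ω → Prop) {A : Set Ω}
    (hAm : MeasurableSet A) (hA : p A)
    (hp : ∀ B : ℕ → Set Ω, (∀ n, MeasurableSet (B n)) → (∀ n, p (B n)) → p (⋃ n, B n)) :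
    ∃ U, MeasurableSet U ∧ p U ∧ ∀ T, MeasurableSet T → p T → μ (T \ U) = 0 := by
  have hunion : ∀ S T, MeasurableSet S → MeasurableSet T → p S → p T → p (S ∪ T) := by
    intro S T hS hT pS pT
    convert hp (fun n => if n = 0 then S else T) (fun n => by split_ifs <;> assumption)
      (fun n => by split_ifs <;> assumption) using 1
    ext ω
    simp only [Set.mem_union, Set.mem_iUnion]
    refine ⟨fun h => h.elim (fun h => ⟨0, by simpa⟩) (fun h => ⟨1, by simpa⟩), ?_⟩
    rintro ⟨n, hn⟩
    split_ifs at hn <;> simp [hn]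
  set M : Set ℝ := {r | ∃ B, MeasurableSet B ∧ p B ∧ μ.real B = r}
  have hM : BddAbove M := ⟨μ.real Set.univ, by
    rintro _ ⟨B, -, -, rfl⟩
    exact measureReal_mono (Set.subset_univ B)⟩
  obtain ⟨u, -, hu_tendsto, huM⟩ := exists_seq_tendsto_sSup (⟨μ.real A, A, hAm, hA, rfl⟩ : M.Nonempty) hM
  choose B hBm hB hBu using huM
  set U := ⋃ n, B n
  have hUm : MeasurableSet U := MeasurableSet.iUnion hBm
  have hsup : μ.real U = sSup M := by
    refine le_antisymm (le_csSup hM ⟨U, hUm, hp B hBm hB, rfl⟩) (le_of_tendsto' hu_tendsto ?_)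
    exact fun n => hBu n ▸ measureReal_mono (Set.subset_iUnion B n)
  refine ⟨U, hUm, hp B hBm hB, fun T hTm hT => ?_⟩
  have hTU : μ.real (T \ U) + μ.real U ≤ μ.real U := by
    rw [← measureReal_union Set.disjoint_sdiff_left hUm, Set.sdiff_union_self, hsup]
    exact le_csSup hM ⟨T ∪ U, hTm.union hUm, hunion T U hTm hUm hT (hp B hBm hB), rfl⟩
  exact (measureReal_eq_zero_iff).mp (le_antisymm (by linarith) measureReal_nonneg)

theorem exists_aeEqFun_eq_on_pairwise_disjoint (P : ℕ → Set Ω) (hP : ∀ n, MeasurableSet (P n))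
    (hd : Pairwise (Function.onFun Disjoint P)) (ξ : ℕ → Ω →ₘ[μ] ℝ) :
    ∃ z : Ω →ₘ[μ] ℝ, ∀ n, ∀ᵐ ω ∂μ, ω ∈ P n → z ω = ξ n ω := by
  obtain ⟨f, hf, hfξ⟩ := exists_measurable_piecewise P hP (fun n => ξ n)
    (fun n => (ξ n).stronglyMeasurable.measurable)
    (fun i j hij ω hω => ((hd hij).le_bot hω).elim)
  refine ⟨AEEqFun.mk f hf.aestronglyMeasurable, fun n => ?_⟩
  filter_upwards [AEEqFun.coeFn_mk f hf.aestronglyMeasurable] with ω hω hn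
  rw [hω, hfξ n hn]

theorem fullOn_mono {C C' : Set (Ω →ₘ[μ] ℝ)} {B : Set Ω} (h : C ⊆ C') (hC : FullOn μ C B) :
    FullOn μ C' B := fun x =>
  let ⟨ξ, hξ, hxξ⟩ := hC x
  ⟨ξ, h hξ, hxξ⟩

theorem fullOn_empty {C : Set (Ω →ₘ[μ] ℝ)} (hC : C.Nonempty) : FullOn μ C ∅ := fun _ =>
  ⟨hC.some, hC.some_mem, Filter.Eventually.of_forall fun _ h => absurd h (Set.notMem_empty _)⟩

theorem CSet.fullOn_iUnion {C : Set (Ω →ₘ[μ] ℝ)} (hC : CSet μ C) {B : ℕ → Set Ω}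
    (hBm : ∀ n, MeasurableSet (B n)) (hB : ∀ n, FullOn μ C (B n)) :
    FullOn μ C (⋃ n, B n) := by
  intro x
  choose ξ hξC hxξ using fun n => hB n x
  -- padding each `B n` by `(⋃ B)ᶜ` yields a cover of `Ω` whose traces on `⋃ B` are the `B n`
  set E : ℕ → Set Ω := fun n => B n ∪ (⋃ k, B k)ᶜ
  have hEB : ∀ n, ∀ ω ∈ E n, ω ∈ ⋃ k, B k → ω ∈ B n :=
    fun n ω hω hU => hω.resolve_right (not_not.mpr hU)
  have hPm : ∀ n, MeasurableSet (disjointed E n) :=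
    MeasurableSet.disjointed fun n => (hBm n).union (MeasurableSet.iUnion hBm).compl
  have hPcover : ⋃ n, disjointed E n = Set.univ := by
    rw [iUnion_disjointed, Set.eq_univ_iff_forall]
    intro ω
    by_cases hω : ω ∈ ⋃ k, B k
    · obtain ⟨n, hn⟩ := Set.mem_iUnion.mp hω
      exact Set.mem_iUnion.mpr ⟨n, Or.inl hn⟩
    · exact Set.mem_iUnion.mpr ⟨0, Or.inr hω⟩
  obtain ⟨z, hz⟩ :=
    exists_aeEqFun_eq_on_pairwise_disjoint (disjointed E) hPm (disjoint_disjointed E) ξ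
  refine ⟨z, hC _ hPm (disjoint_disjointed E) hPcover ξ hξC z hz, ?_⟩
  filter_upwards [ae_all_iff.mpr hz, ae_all_iff.mpr hxξ] with ω hzω hxω hU
  obtain ⟨n, hn⟩ := Set.mem_iUnion.mp (hPcover ▸ Set.mem_univ ω)
  rw [hxω n (hEB n ω (disjointed_subset E n hn) hU), hzω n hn]

theorem exists_isMaxFull_of_cSet [IsFiniteMeasure μ] {C : Set (Ω →ₘ[μ] ℝ)} (hC : CSet μ C)
    (hne : C.Nonempty) : ∃ A, IsMaxFull μ C A :=
  exists_ae_maximal_of_iUnion (FullOn μ C) MeasurableSet.empty (fullOn_empty hne)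
    fun _ hBm hB => hC.fullOn_iUnion hBm hB

theorem IsMaxFull.ae_eq {C : Set (Ω →ₘ[μ] ℝ)} {A B : Set Ω} (hA : IsMaxFull μ C A)
    (hB : IsMaxFull μ C B) : A =ᵐ[μ] B :=
  (ae_le_set.mpr (hB.2.2 A hA.1 hA.2.1)).antisymm (ae_le_set.mpr (hA.2.2 B hB.1 hB.2.1))

theorem subset_bipolarSet {C : Set (Ω →ₘ[μ] ℝ)} {D : Set Ω} : C ⊆ bipolarSet μ C D :=
  fun _ hx _ hx' => hx' _ hx

theorem cSet_bipolarSet {C : Set (Ω →ₘ[μ] ℝ)} {D : Set Ω} : CSet μ (bipolarSet μ C D) := by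
  intro B _ _ hcover x hx z hz x' hx'
  filter_upwards [ae_all_iff.mpr hz, ae_all_iff.mpr fun n => hx n x' hx'] with ω hzω hxω hω
  obtain ⟨n, hn⟩ := Set.mem_iUnion.mp (hcover ▸ Set.mem_univ ω)
  rw [hzω n hn]
  exact hxω n hω

theorem bipolarSet_eq_iInter_of_isMaxFull {C : Set (Ω →ₘ[μ] ℝ)} {A A' : Set Ω}
    (hA : IsMaxFull μ C A) (hA' : IsMaxFull μ (bipolarSet μ C Aᶜ) A') :
    bipolarSet μ C Aᶜ = ⋂ x' ∈ polarSet μ C Aᶜ,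
      {x : Ω →ₘ[μ] ℝ | ∀ᵐ ω ∂μ, ω ∈ A'ᶜ → x ω * x' ω < (1 : Ω →ₘ[μ] ℝ) ω} := by
  have hAA' : A'ᶜ ≤ᵐ[μ] Aᶜ :=
    (ae_le_set.mpr (hA'.2.2 A hA.1 (fullOn_mono subset_bipolarSet hA.2.1))).compl
  ext x
  simp only [Set.mem_iInter, Set.mem_ofPred_eq]
  constructor
  · intro hx x' hx'
    filter_upwards [ae_imp_of_ae_le (hx x' hx') hAA', (AEEqFun.coeFn_one : ⇑(1 : Ω →ₘ[μ] ℝ) =ᵐ[μ] 1)] with ω hxω h1 hω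
    simpa [h1] using hxω hω
  · intro hx x' hx'
    obtain ⟨ξ, hξ, hxξ⟩ := hA'.2.1 x
    filter_upwards [hx x' hx', hξ x' hx', hxξ, (AEEqFun.coeFn_one : ⇑(1 : Ω →ₘ[μ] ℝ) =ᵐ[μ] 1)] with ω hout hin hxξω h1 hω
    by_cases hωA' : ω ∈ A'
    · rw [hxξω hωA']
      exact hin hω
    · simpa [h1] using hout hωA'

theorem CondEvenlyConvex.bipolarSet_subset {C : Set (Ω →ₘ[μ] ℝ)} (hC : CondEvenlyConvex μ C)
    (h0 : (0 : Ω →ₘ[μ] ℝ) ∈ C) {A : Set Ω} (hA : IsMaxFull μ C A) :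
    bipolarSet μ C Aᶜ ⊆ C := by
  obtain ⟨A₀, hA₀, L, Y, hrep⟩ := hC
  simp_rw [ae_imp_congr_set (hA₀.ae_eq hA).compl] at hrep
  have hmem : ∀ ξ ∈ C, ∀ x' ∈ L, ∀ᵐ ω ∂μ, ω ∈ Aᶜ → ξ ω * x' ω < Y x' ω := by
    intro ξ hξ x' hx'
    rw [hrep] at hξ
    exact Set.mem_iInter₂.mp hξ x' hx'
  intro x hx
  rw [hrep]
  refine Set.mem_iInter₂.mpr fun x' hx' => ?_
  have hY : ∀ᵐ ω ∂μ, ω ∈ Aᶜ → 0 < Y x' ω := by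
    filter_upwards [hmem 0 h0 x' hx', (AEEqFun.coeFn_zero : ⇑(0 : Ω →ₘ[μ] ℝ) =ᵐ[μ] 0)] with ω h h0ω hω
    simpa [h0ω] using h hω
  have hqm : AEMeasurable (fun ω => x' ω * (Y x' ω)⁻¹) μ :=
    x'.aestronglyMeasurable.aemeasurable.mul (Y x').aestronglyMeasurable.aemeasurable.inv
  set q : Ω →ₘ[μ] ℝ := AEEqFun.mk _ hqm.aestronglyMeasurable
  have hscale : ∀ ξ : Ω →ₘ[μ] ℝ, (∀ᵐ ω ∂μ, ω ∈ Aᶜ → ξ ω * q ω < 1) ↔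
      ∀ᵐ ω ∂μ, ω ∈ Aᶜ → ξ ω * x' ω < Y x' ω := by
    intro ξ
    refine Filter.eventually_congr ?_
    filter_upwards [hY, AEEqFun.coeFn_mk _ hqm.aestronglyMeasurable] with ω hYω hqω
    refine imp_congr_right fun hω => ?_
    rw [hqω, ← mul_assoc, mul_inv_lt_iff₀ (hYω hω), one_mul]
  exact (hscale x).mp (hx q fun ξ hξ => (hscale ξ).mpr (hmem ξ hξ x' hx'))

/-- **Bipolar theorem, parts 2 and 3.**  Let `C ⊆ L⁰` with `0 ∈ C`, and let `A` be
the maximal set `A_C` (so `Aᶜ = D_C`).  Then (1) the bipolar `C°°` is a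
conditionally evenly convex set containing `C`; (2) `C` is conditionally evenly
convex if and only if `C = C°°`. -/
theorem stmt2 (μ : Measure Ω) [IsProbabilityMeasure μ]
    (C : Set (Ω →ₘ[μ] ℝ)) (h0 : (0 : Ω →ₘ[μ] ℝ) ∈ C)
    (A : Set Ω) (hA : IsMaxFull μ C A) :
    (CondEvenlyConvex μ (bipolarSet μ C Aᶜ) ∧ C ⊆ bipolarSet μ C Aᶜ) ∧
      (CondEvenlyConvex μ C ↔ C = bipolarSet μ C Aᶜ) := by
  obtain ⟨A', hA'⟩ := exists_isMaxFull_of_cSet (cSet_bipolarSet (C := C) (D := Aᶜ))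
    ⟨0, subset_bipolarSet h0⟩
  have hbip : CondEvenlyConvex μ (bipolarSet μ C Aᶜ) :=
    ⟨A', hA', polarSet μ C Aᶜ, fun _ => 1, bipolarSet_eq_iInter_of_isMaxFull hA hA'⟩
  exact ⟨⟨hbip, subset_bipolarSet⟩,
    fun hC => subset_bipolarSet.antisymm (hC.bipolarSet_subset h0 hA), fun h => by rwa [h]⟩
end

section
/- Let C ⊆ L⁰ be nonempty and satisfy the countable concatenation property. The following are equivalent: (1) C is conditionally evenly convex; (2) for every x ∈ L⁰ with x ∉ C there exists x′ ∈ L⁰ such that ξ·x′ < x·x′ a.e. on H_{C,x} for all ξ ∈ C, where H_{C,x} is the largest 𝒢-measurable set on which x is locally separated from C. -/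
open MeasureTheory

variable {Ω : Type*} [MeasurableSpace Ω]

/-!
Each class of measurable sets met below (where `z` agrees with an element of `C`, where `z` is
separated from `C`, where `C·u < c`, ...) is closed under countable unions and hence has an
essential maximum.

(1 ⇒ 2) Let `G` be the essential maximum of the sets on which `x` is separated from `C`. Each
set where `x` violates one of the half-spaces defining `C` lies in `G`, so on `H_{C,x} \ G` the
element `x` satisfies all of them and, concatenated with an element of `C`, belongs to `C`;
hence `H_{C,x} ⊆ G` a.e.

(2 ⇒ 1) Rescale a separator `u` of `x` so that `x·u ∈ {-1, 0, 1}` on `H_{C,x}` and `u = 0`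
off it. The bound `Y_u` equal to `-1`, `0` or `1` according as `C·u < -1`, `C·u < 0` or
neither depends on `u` only, is strictly above `C·u`, and is reached by `x·u` on `H_{C,x}`.
As `H_{C,x}` has positive measure and meets `A_C` in a null set, these half-spaces exclude
every `x ∉ C`.
-/

open Set ENNReal

def IsSigmaUnionClosed (p : Set Ω → Prop) : Prop :=
  ∀ B : ℕ → Set Ω, (∀ n, MeasurableSet (B n)) → (∀ n, p (B n)) → p (⋃ n, B n)

def IsEssMax (μ : Measure Ω) (p : Set Ω → Prop) (A : Set Ω) : Prop :=
  MeasurableSet A ∧ p A ∧ ∀ B, MeasurableSet B → p B → μ (B \ A) = 0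

theorem IsSigmaUnionClosed.union {p : Set Ω → Prop} (hp : IsSigmaUnionClosed p)
    {S T : Set Ω} (hS : MeasurableSet S) (hT : MeasurableSet T) (hpS : p S) (hpT : p T) :
    p (S ∪ T) := by
  have h := hp (fun n => if n = 0 then S else T) (fun n => by split_ifs <;> assumption)
    (fun n => by split_ifs <;> assumption)
  convert h using 1
  ext ω
  simp only [mem_union, mem_iUnion]
  constructor
  · rintro (hω | hω)
    exacts [⟨0, by simpa using hω⟩, ⟨1, by simpa using hω⟩]
  · rintro ⟨n, hn⟩
    split_ifs at hn
    exacts [Or.inl hn, Or.inr hn]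

/-- Take a sequence of members of `p` whose measures approach the supremum; its union is the
essential maximum because a larger member would have larger measure. -/
theorem IsSigmaUnionClosed.exists_isEssMax (μ : Measure Ω) [IsFiniteMeasure μ]
    {p : Set Ω → Prop} (hp : IsSigmaUnionClosed p) (hp₀ : p ∅) : ∃ A, IsEssMax μ p A := by
  set S : Set ℝ≥0∞ := μ '' {B | MeasurableSet B ∧ p B}
  obtain ⟨r, -, hr, hrS⟩ := exists_seq_tendsto_sSup (S := S) ⟨_, ∅, ⟨.empty, hp₀⟩, rfl⟩
    (OrderTop.bddAbove S)
  choose B hB hμB using hrS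
  set U := ⋃ n, B n
  have hUm : MeasurableSet U := .iUnion fun n => (hB n).1
  have hpU : p U := hp B (fun n => (hB n).1) fun n => (hB n).2
  have hμU : μ U = sSup S := le_antisymm (le_sSup ⟨U, ⟨hUm, hpU⟩, rfl⟩)
    (le_of_tendsto' hr fun n => hμB n ▸ measure_mono (subset_iUnion B n))
  refine ⟨U, hUm, hpU, fun D hDm hpD => ?_⟩
  have hle : μ U + μ (D \ U) ≤ μ U + 0 := by
    rw [add_zero, ← measure_union disjoint_sdiff_right (hDm.diff hUm), union_sdiff_self, hμU]
    exact le_sSup ⟨U ∪ D, ⟨hUm.union hDm, hp.union hUm hDm hpU hpD⟩, rfl⟩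
  exact nonpos_iff_eq_zero.1 (ENNReal.le_of_add_le_add_left (measure_ne_top μ U) hle)

theorem exists_ae_eq_on_partition (μ : Measure Ω) {A : ℕ → Set Ω}
    (hA : ∀ n, MeasurableSet (A n)) (hdisj : Pairwise (Function.onFun Disjoint A))
    (hcov : ⋃ n, A n = univ)
    (g : ℕ → Ω →ₘ[μ] ℝ) : ∃ z : Ω →ₘ[μ] ℝ, ∀ n, ∀ᵐ ω ∂μ, ω ∈ A n → z ω = g n ω := by
  classical
  have hex : ∀ ω, ∃ n, ω ∈ A n := fun ω => mem_iUnion.1 (hcov ▸ mem_univ ω)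
  have hmeas : Measurable fun ω => g (Nat.find (hex ω)) ω :=
    Measurable.find (p := fun n ω => ω ∈ A n) (fun n => (g n).measurable) hA hex
  refine ⟨AEEqFun.mk _ hmeas.aestronglyMeasurable, fun n => ?_⟩
  filter_upwards [AEEqFun.coeFn_mk _ hmeas.aestronglyMeasurable] with ω hω hn
  have hfind : Nat.find (hex ω) = n := by
    by_contra hne
    exact (hdisj hne).le_bot ⟨Nat.find_spec (hex ω), hn⟩
  rw [hω, hfind]

def disjointedPartition {α : Type*} (B : ℕ → Set α) : ℕ → Set α
  | 0 => (⋃ n, B n)ᶜ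
  | k + 1 => disjointed B k

theorem measurableSet_disjointedPartition {B : ℕ → Set Ω} (hB : ∀ n, MeasurableSet (B n)) :
    ∀ k, MeasurableSet (disjointedPartition B k)
  | 0 => (MeasurableSet.iUnion hB).compl
  | k + 1 => MeasurableSet.disjointed hB k

theorem pairwise_disjoint_disjointedPartition {α : Type*} (B : ℕ → Set α) :
    Pairwise (Function.onFun Disjoint (disjointedPartition B)) := by
  rintro (_ | i) (_ | j) hij
  · exact absurd rfl hij
  · exact disjoint_compl_left.mono_right
      ((disjointed_subset B j).trans (subset_iUnion B j))
  · exact disjoint_compl_right.mono_left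
      ((disjointed_subset B i).trans (subset_iUnion B i))
  · exact disjoint_disjointed B (by omega)

theorem iUnion_disjointedPartition {α : Type*} (B : ℕ → Set α) :
    ⋃ k, disjointedPartition B k = univ := by
  refine eq_univ_of_forall fun a => ?_
  by_cases ha : a ∈ ⋃ n, B n
  · rw [← iUnion_disjointed] at ha
    obtain ⟨n, hn⟩ := mem_iUnion.1 ha
    exact mem_iUnion.2 ⟨n + 1, hn⟩
  · exact mem_iUnion.2 ⟨0, ha⟩

theorem exists_ae_eq_on_disjointed (μ : Measure Ω) {B : ℕ → Set Ω}
    (hB : ∀ n, MeasurableSet (B n)) (g₀ : Ω →ₘ[μ] ℝ) (g : ℕ → Ω →ₘ[μ] ℝ) :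
    ∃ z : Ω →ₘ[μ] ℝ, (∀ᵐ ω ∂μ, ω ∉ ⋃ n, B n → z ω = g₀ ω) ∧
      ∀ n, ∀ᵐ ω ∂μ, ω ∈ disjointed B n → z ω = g n ω := by
  obtain ⟨z, hz⟩ := exists_ae_eq_on_partition μ (measurableSet_disjointedPartition hB)
    (pairwise_disjoint_disjointedPartition B) (iUnion_disjointedPartition B)
    (fun k => Nat.casesOn k g₀ g)
  exact ⟨z, hz 0, fun n => hz (n + 1)⟩

theorem CSet.mem_of_ae_eq_on_disjointed {μ : Measure Ω} {C : Set (Ω →ₘ[μ] ℝ)}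
    (hcc : CSet μ C) {B : ℕ → Set Ω} (hB : ∀ n, MeasurableSet (B n)) {g₀ : Ω →ₘ[μ] ℝ}
    {g : ℕ → Ω →ₘ[μ] ℝ} (hg₀ : g₀ ∈ C) (hg : ∀ n, g n ∈ C) {z : Ω →ₘ[μ] ℝ}
    (hz₀ : ∀ᵐ ω ∂μ, ω ∉ ⋃ n, B n → z ω = g₀ ω)
    (hz : ∀ n, ∀ᵐ ω ∂μ, ω ∈ disjointed B n → z ω = g n ω) : z ∈ C :=
  hcc _ (measurableSet_disjointedPartition hB) (pairwise_disjoint_disjointedPartition B)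
    (iUnion_disjointedPartition B) (fun k => Nat.casesOn k g₀ g)
    (fun k => Nat.casesOn k hg₀ hg) z (fun k => Nat.casesOn k hz₀ hz)

section

variable {μ : Measure Ω} {C : Set (Ω →ₘ[μ] ℝ)}

/-- `FullOn μ C A` and `LocOutside μ C z H` unfold to statements about `MatchesOn`. -/
def MatchesOn (μ : Measure Ω) (C : Set (Ω →ₘ[μ] ℝ)) (z : Ω →ₘ[μ] ℝ) (B : Set Ω) : Prop :=
  ∃ ξ ∈ C, ∀ᵐ ω ∂μ, ω ∈ B → z ω = ξ ω

def SeparatedOn (μ : Measure Ω) (C : Set (Ω →ₘ[μ] ℝ)) (z : Ω →ₘ[μ] ℝ) (B : Set Ω) : Prop :=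
  ∃ x' : Ω →ₘ[μ] ℝ, ∀ ξ ∈ C, ∀ᵐ ω ∂μ, ω ∈ B → ξ ω * x' ω < z ω * x' ω

def PairingLtOn (μ : Measure Ω) (C : Set (Ω →ₘ[μ] ℝ)) (u : Ω →ₘ[μ] ℝ) (c : ℝ) (B : Set Ω) :
    Prop :=
  ∀ ξ ∈ C, ∀ᵐ ω ∂μ, ω ∈ B → ξ ω * u ω < c

theorem matchesOn_empty (hne : C.Nonempty) (z : Ω →ₘ[μ] ℝ) : MatchesOn μ C z ∅ :=
  ⟨hne.some, hne.some_mem, ae_of_all _ fun _ h => absurd h (notMem_empty _)⟩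

theorem CSet.isSigmaUnionClosed_matchesOn (hcc : CSet μ C) (hne : C.Nonempty)
    (z : Ω →ₘ[μ] ℝ) : IsSigmaUnionClosed (MatchesOn μ C z) := by
  intro B hB hmatch
  choose ξ hξC hξ using hmatch
  obtain ⟨w, hw₀, hw⟩ := exists_ae_eq_on_disjointed μ hB hne.some ξ
  refine ⟨w, hcc.mem_of_ae_eq_on_disjointed hB hne.some_mem hξC hw₀ hw, ?_⟩
  filter_upwards [ae_all_iff.2 hw, ae_all_iff.2 hξ] with ω hwω hξω hω
  obtain ⟨n, hn⟩ := mem_iUnion.1 ((iUnion_disjointed (f := B)).symm ▸ hω)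
  rw [hξω n (disjointed_subset B n hn), hwω n hn]

theorem isSigmaUnionClosed_separatedOn (z : Ω →ₘ[μ] ℝ) :
    IsSigmaUnionClosed (SeparatedOn μ C z) := by
  intro B hB hsep
  choose x hx using hsep
  obtain ⟨x', -, hx'⟩ := exists_ae_eq_on_disjointed μ hB 0 x
  refine ⟨x', fun ξ hξ => ?_⟩
  filter_upwards [ae_all_iff.2 hx', ae_all_iff.2 fun n => hx n ξ hξ] with ω hx'ω hxω hω
  obtain ⟨n, hn⟩ := mem_iUnion.1 ((iUnion_disjointed (f := B)).symm ▸ hω)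
  rw [hx'ω n hn]
  exact hxω n (disjointed_subset B n hn)

theorem isSigmaUnionClosed_pairingLtOn (u : Ω →ₘ[μ] ℝ) (c : ℝ) :
    IsSigmaUnionClosed (PairingLtOn μ C u c) := by
  intro B _ hB ξ hξ
  filter_upwards [ae_all_iff.2 fun n => hB n ξ hξ] with ω hω hmem
  obtain ⟨n, hn⟩ := mem_iUnion.1 hmem
  exact hω n hn

theorem isSigmaUnionClosed_locOutside (z : Ω →ₘ[μ] ℝ) :
    IsSigmaUnionClosed (LocOutside μ C z) := by
  intro B hBm hB D hDm hDB hDpos hmatch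
  obtain ⟨n, hn⟩ : ∃ n, 0 < μ (D ∩ B n) := by
    by_contra! h
    refine hDpos.ne' (measure_mono_null (fun ω hω => ?_) (measure_iUnion_null fun n =>
      nonpos_iff_eq_zero.1 (h n)))
    exact mem_iUnion.2 ((mem_iUnion.1 (hDB hω)).imp fun n hn => ⟨hω, hn⟩)
  obtain ⟨ξ, hξC, hξ⟩ := hmatch
  exact hB n (D ∩ B n) (hDm.inter (hBm n)) inter_subset_right hn
    ⟨ξ, hξC, hξ.mono fun ω h hω => h hω.1⟩

theorem CSet.exists_isMaxFull [IsFiniteMeasure μ] (hcc : CSet μ C) (hne : C.Nonempty) :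
    ∃ A, IsMaxFull μ C A :=
  IsSigmaUnionClosed.exists_isEssMax μ
    (fun B hB hfull x => hcc.isSigmaUnionClosed_matchesOn hne x B hB fun n => hfull n x)
    (fun x => matchesOn_empty hne x)

theorem exists_isMaxLocOutside [IsFiniteMeasure μ] (z : Ω →ₘ[μ] ℝ) :
    ∃ H, IsMaxLocOutside μ C z H :=
  (isSigmaUnionClosed_locOutside z).exists_isEssMax μ fun _ _ hB hpos =>
    absurd (measure_mono_null hB measure_empty) hpos.ne'

/-- If `μ H_{C,z} = 0`, then the essential maximum of the sets on which `z` matches `C`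
is conull, and concatenation turns the match into `z ∈ C`. -/
theorem CSet.measure_pos_of_isMaxLocOutside [IsFiniteMeasure μ] (hcc : CSet μ C)
    (hne : C.Nonempty) {z : Ω →ₘ[μ] ℝ} (hz : z ∉ C) {H : Set Ω}
    (hH : IsMaxLocOutside μ C z H) : 0 < μ H := by
  have hclosed := hcc.isSigmaUnionClosed_matchesOn hne z
  obtain ⟨M, hMm, ⟨ξ, hξC, hξ⟩, hMmax⟩ := hclosed.exists_isEssMax μ (matchesOn_empty hne z)
  have hMc : LocOutside μ C z Mᶜ := fun B hBm hBM hBpos hB => by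
    have := hMmax _ (hMm.union hBm) (hclosed.union hMm hBm ⟨ξ, hξC, hξ⟩ hB)
    rw [union_sdiff_left, sdiff_eq_left.2 (subset_compl_iff_disjoint_right.1 hBM)] at this
    exact hBpos.ne' this
  refine pos_iff_ne_zero.2 fun hH0 => hz ?_
  have hM : ∀ᵐ ω ∂μ, ω ∈ M := mem_ae_iff.2 <| measure_mono_null (subset_sdiff_union Mᶜ H)
    (measure_union_null (hH.2.2 _ hMm.compl hMc) hH0)
  have hzξ : z = ξ := AEEqFun.ext (by filter_upwards [hM, hξ] with ω hωM hω using hω hωM)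
  exact hzξ ▸ hξC

theorem IsMaxFull.measure_inter_eq_zero {A H : Set Ω} {z : Ω →ₘ[μ] ℝ} (hA : IsMaxFull μ C A)
    (hHm : MeasurableSet H) (hH : LocOutside μ C z H) : μ (H ∩ A) = 0 := by
  by_contra h
  obtain ⟨ξ, hξC, hξ⟩ := hA.2.1 z
  exact hH (H ∩ A) (hHm.inter hA.1) inter_subset_left (pos_iff_ne_zero.2 h)
    ⟨ξ, hξC, hξ.mono fun ω hω hmem => hω hmem.2⟩

/-- The matching element of `C` is `z` on `S` and any `ξ₀ ∈ C` off `S`. -/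
theorem matchesOn_of_ae_lt {D S : Set Ω} {L : Set (Ω →ₘ[μ] ℝ)} {Y : (Ω →ₘ[μ] ℝ) → Ω →ₘ[μ] ℝ}
    (hne : C.Nonempty) (hC : C = ⋂ v ∈ L, {x | ∀ᵐ ω ∂μ, ω ∈ D → x ω * v ω < Y v ω})
    (hS : MeasurableSet S) {z : Ω →ₘ[μ] ℝ}
    (hz : ∀ v ∈ L, ∀ᵐ ω ∂μ, ω ∈ S ∩ D → z ω * v ω < Y v ω) : MatchesOn μ C z S := by
  classical
  obtain ⟨ξ₀, hξ₀⟩ := hne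
  have hm : Measurable (S.piecewise z ξ₀) := z.measurable.piecewise hS ξ₀.measurable
  have hw := AEEqFun.coeFn_mk (μ := μ) _ hm.aestronglyMeasurable
  refine ⟨AEEqFun.mk _ hm.aestronglyMeasurable, ?_, ?_⟩
  · rw [hC] at hξ₀ ⊢
    refine mem_iInter₂.2 fun v hv => ?_
    change ∀ᵐ ω ∂μ, _
    filter_upwards [hw, hz v hv, mem_iInter₂.1 hξ₀ v hv] with ω hwω hzω hξω hωD
    rw [hwω]
    by_cases hωS : ω ∈ S
    · simpa [hωS] using hzω ⟨hωS, hωD⟩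
    · simpa [hωS] using hξω hωD
  · filter_upwards [hw] with ω hwω hωS
    rw [hwω, piecewise_eq_of_mem _ _ _ hωS]

theorem CondEvenlyConvex.separatedOn [IsFiniteMeasure μ] (hC : CondEvenlyConvex μ C)
    (hne : C.Nonempty) {z : Ω →ₘ[μ] ℝ} {H : Set Ω} (hH : IsMaxLocOutside μ C z H) :
    SeparatedOn μ C z H := by
  obtain ⟨A, hA, L, Y, hCeq⟩ := hC
  obtain ⟨G, hGm, ⟨x', hx'⟩, hGmax⟩ := (isSigmaUnionClosed_separatedOn (C := C) z).exists_isEssMax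
    μ ⟨0, fun _ _ => ae_of_all _ fun _ h => absurd h (notMem_empty _)⟩
  have hmemC : ∀ ξ ∈ C, ∀ v ∈ L, ∀ᵐ ω ∂μ, ω ∈ Aᶜ → ξ ω * v ω < Y v ω :=
    fun ξ hξ => by rw [hCeq] at hξ; exact fun v hv => mem_iInter₂.1 hξ v hv
  have hFG : ∀ v ∈ L, (Aᶜ ∩ {ω | Y v ω ≤ z ω * v ω} : Set Ω) ≤ᵐ[μ] G := fun v hv =>
    ae_le_set.2 <| hGmax _
      (hA.1.compl.inter (measurableSet_le (Y v).measurable (z.measurable.mul v.measurable)))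
      ⟨v, fun ξ hξ => by
        filter_upwards [hmemC ξ hξ v hv] with ω h hω using (h hω.1).trans_le hω.2⟩
  have hHG : μ (H \ G) = 0 := by
    by_contra hpos
    refine hH.2.1 (H \ G) (hH.1.diff hGm) sdiff_subset (pos_iff_ne_zero.2 hpos) ?_
    refine matchesOn_of_ae_lt hne hCeq (hH.1.diff hGm) fun v hv => ?_
    filter_upwards [hFG v hv] with ω hω ⟨⟨_, hωG⟩, hωD⟩
    exact lt_of_not_ge fun hle => hωG (hω ⟨hωD, hle⟩)
  refine ⟨x', fun ξ hξ => ?_⟩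
  filter_upwards [hx' ξ hξ, ae_le_set.2 hHG] with ω h hωG hω using h (hωG hω)

noncomputable def normalizer (b : ℝ) : ℝ := if b = 0 then 1 else |b|

theorem normalizer_pos (b : ℝ) : 0 < normalizer b := by
  unfold normalizer
  split_ifs with hb
  exacts [one_pos, abs_pos.2 hb]

theorem measurable_normalizer : Measurable normalizer :=
  Measurable.ite (measurableSet_singleton 0) measurable_const measurable_abs

theorem div_normalizer_trichotomy (b : ℝ) :
    b / normalizer b = -1 ∨ b / normalizer b = 0 ∨ b / normalizer b = 1 := by
  unfold normalizer
  rcases lt_trichotomy b 0 with hb | rfl | hb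
  · simp [abs_of_neg hb, hb.ne]
  · simp
  · simp [abs_of_pos hb, hb.ne']

def IsNormalizedSeparator (μ : Measure Ω) (C : Set (Ω →ₘ[μ] ℝ)) (z u : Ω →ₘ[μ] ℝ)
    (H : Set Ω) : Prop :=
  (∀ᵐ ω ∂μ, ω ∉ H → u ω = 0) ∧
    (∀ᵐ ω ∂μ, ω ∈ H → z ω * u ω = -1 ∨ z ω * u ω = 0 ∨ z ω * u ω = 1) ∧
    ∀ ξ ∈ C, ∀ᵐ ω ∂μ, ω ∈ H → ξ ω * u ω < z ω * u ω

theorem SeparatedOn.exists_isNormalizedSeparator {z : Ω →ₘ[μ] ℝ} {H : Set Ω}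
    (hH : MeasurableSet H) (hsep : SeparatedOn μ C z H) :
    ∃ u, IsNormalizedSeparator μ C z u H := by
  obtain ⟨x', hx'⟩ := hsep
  set m : Ω → ℝ := fun ω => normalizer (z ω * x' ω)
  have hm : Measurable (H.indicator fun ω => x' ω / m ω) :=
    (x'.measurable.div (measurable_normalizer.comp (z.measurable.mul x'.measurable))).indicator hH
  have hu := AEEqFun.coeFn_mk (μ := μ) _ hm.aestronglyMeasurable
  have hzu : ∀ᵐ ω ∂μ, ∀ y : ℝ, ω ∈ H → y * AEEqFun.mk (μ := μ) _ hm.aestronglyMeasurable ω =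
      y * x' ω / m ω := by
    filter_upwards [hu] with ω hω y hωH
    rw [hω, indicator_of_mem hωH, mul_div_assoc]
  refine ⟨AEEqFun.mk _ hm.aestronglyMeasurable, ?_, ?_, fun ξ hξ => ?_⟩
  · filter_upwards [hu] with ω hω hωH
    rw [hω, indicator_of_notMem hωH]
  · filter_upwards [hzu] with ω hω hωH
    rw [hω _ hωH]
    exact div_normalizer_trichotomy _
  · filter_upwards [hzu, hx' ξ hξ] with ω hω hξω hωH
    rw [hω _ hωH, hω _ hωH]
    exact div_lt_div_of_pos_right (hξω hωH) (normalizer_pos _)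

open Classical in
noncomputable def levelFun (N Z : Set Ω) (ω : Ω) : ℝ :=
  if ω ∈ N then -1 else if ω ∈ Z then 0 else 1

theorem measurable_levelFun {N Z : Set Ω} (hN : MeasurableSet N) (hZ : MeasurableSet Z) :
    Measurable (levelFun N Z) :=
  Measurable.ite hN measurable_const (Measurable.ite hZ measurable_const measurable_const)

theorem IsNormalizedSeparator.ae_mul_lt_levelFun {N Z H : Set Ω} {z u ξ : Ω →ₘ[μ] ℝ}
    (hN : PairingLtOn μ C u (-1) N) (hZ : PairingLtOn μ C u 0 Z)
    (hu : IsNormalizedSeparator μ C z u H) (hξ : ξ ∈ C) :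
    ∀ᵐ ω ∂μ, ξ ω * u ω < levelFun N Z ω := by
  obtain ⟨hu₀, hzu, hsep⟩ := hu
  filter_upwards [hN ξ hξ, hZ ξ hξ, hu₀, hzu, hsep ξ hξ] with ω hNω hZω hu₀ω hzuω hsepω
  unfold levelFun
  split_ifs with hωN hωZ
  · exact hNω hωN
  · exact hZω hωZ
  · by_cases hωH : ω ∈ H
    · have := hsepω hωH
      rcases hzuω hωH with h | h | h <;> linarith
    · rw [hu₀ω hωH, mul_zero]
      exact one_pos

/-- Where `z·u = c` for `c ∈ {-1, 0}`, every `ξ ∈ C` has `ξ·u < c`, so that set lies a.e.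
in the essential maximum for the level `c`. -/
theorem IsNormalizedSeparator.ae_levelFun_le_mul {N Z H : Set Ω} {z u : Ω →ₘ[μ] ℝ}
    (hN : IsEssMax μ (PairingLtOn μ C u (-1)) N) (hZ : IsEssMax μ (PairingLtOn μ C u 0) Z)
    (hH : MeasurableSet H) (hu : IsNormalizedSeparator μ C z u H) :
    ∀ᵐ ω ∂μ, ω ∈ H → levelFun N Z ω ≤ z ω * u ω := by
  obtain ⟨-, hzu, hsep⟩ := hu
  have hlevel : ∀ {c : ℝ} {S : Set Ω}, IsEssMax μ (PairingLtOn μ C u c) S →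
      (H ∩ {ω | z ω * u ω = c} : Set Ω) ≤ᵐ[μ] S := fun hS =>
    ae_le_set.2 <| hS.2.2 _ (hH.inter (measurableSet_eq_fun (z.measurable.mul u.measurable)
      measurable_const)) fun ξ hξ => by
        filter_upwards [hsep ξ hξ] with ω hω hωc using hωc.2 ▸ hω hωc.1
  filter_upwards [hzu, hlevel hN, hlevel hZ] with ω hzuω hωN hωZ hωH
  unfold levelFun
  rcases hzuω hωH with h | h | h
  · rw [if_pos (show ω ∈ N from hωN ⟨hωH, h⟩), h]
  · have hωZ' : ω ∈ Z := hωZ ⟨hωH, h⟩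
    split_ifs <;> linarith
  · split_ifs <;> linarith

theorem condEvenlyConvex_of_forall_separatedOn [IsFiniteMeasure μ] (hne : C.Nonempty)
    (hcc : CSet μ C)
    (hsep : ∀ z ∉ C, ∀ H, IsMaxLocOutside μ C z H → SeparatedOn μ C z H) :
    CondEvenlyConvex μ C := by
  obtain ⟨A, hA⟩ := hcc.exists_isMaxFull hne
  choose S hS using fun (u : Ω →ₘ[μ] ℝ) (c : ℝ) =>
    (isSigmaUnionClosed_pairingLtOn (C := C) u c).exists_isEssMax μ
      fun _ _ => ae_of_all _ fun _ h => absurd h (notMem_empty _)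
  have hY : ∀ u, Measurable (levelFun (S u (-1)) (S u 0)) :=
    fun u => measurable_levelFun (hS u (-1)).1 (hS u 0).1
  set Y := fun u => AEEqFun.mk (μ := μ) _ (hY u).aestronglyMeasurable
  have hYeq : ∀ u, ∀ᵐ ω ∂μ, Y u ω = levelFun (S u (-1)) (S u 0) ω :=
    fun u => AEEqFun.coeFn_mk _ _
  refine ⟨A, hA, {u | ∃ z H, IsNormalizedSeparator μ C z u H}, Y, subset_antisymm ?_ ?_⟩
  · intro ξ hξ
    refine mem_iInter₂.2 fun u ⟨z, H, hu⟩ => ?_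
    change ∀ᵐ ω ∂μ, _
    filter_upwards [hYeq u, hu.ae_mul_lt_levelFun (hS u (-1)).2.1 (hS u 0).2.1 hξ]
      with ω hYω hω _
    rwa [hYω]
  · intro z hz
    by_contra hzC
    obtain ⟨H, hH⟩ := exists_isMaxLocOutside (C := C) z
    obtain ⟨u, hu⟩ := (hsep z hzC H hH).exists_isNormalizedSeparator hH.1
    have hlt : ∀ᵐ ω ∂μ, ω ∈ Aᶜ → z ω * u ω < Y u ω := mem_iInter₂.1 hz u ⟨z, H, hu⟩
    have hHA : μ (H \ A) = 0 := by
      refine measure_eq_zero_iff_ae_notMem.2 ?_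
      filter_upwards [hlt, hu.ae_levelFun_le_mul (hS u (-1)) (hS u 0) hH.1, hYeq u]
        with ω hltω hleω hYω ⟨hωH, hωA⟩
      linarith [hYω ▸ hltω hωA, hleω hωH]
    have hμH := measure_inter_add_sdiff (μ := μ) H hA.1
    rw [hA.measure_inter_eq_zero hH.1 hH.2.1, hHA, add_zero] at hμH
    exact (hcc.measure_pos_of_isMaxLocOutside hne hzC hH).ne' hμH.symm

end

/-- **Proposition (separation on `H_{C,x}`).**  Let `C ⊆ L⁰` be nonempty and
satisfy the countable concatenation property.  The following are equivalent:
(1) `C` is conditionally evenly convex; (2) for every `x ∉ C` there exists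
`x' ∈ L⁰` such that `ξ·x' < x·x'` a.e. on `H_{C,x}` for all `ξ ∈ C`, where
`H_{C,x}` is the largest measurable set on which `x` is locally separated from `C`. -/
theorem stmt4 (μ : Measure Ω) [IsProbabilityMeasure μ]
    (C : Set (Ω →ₘ[μ] ℝ)) (hne : C.Nonempty) (hcc : CSet μ C) :
    CondEvenlyConvex μ C ↔
      ∀ x : Ω →ₘ[μ] ℝ, x ∉ C → ∀ H : Set Ω, IsMaxLocOutside μ C x H →
        ∃ x' : Ω →ₘ[μ] ℝ, ∀ ξ ∈ C,
          ∀ᵐ ω ∂μ, ω ∈ H → ξ ω * x' ω < x ω * x' ω :=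
  ⟨fun hC _ _ _ hH => hC.separatedOn hne hH, condEvenlyConvex_of_forall_separatedOn hne hcc⟩
end

section
/- Let π : L⁰ → L̄⁰ be regular (REG) and conditionally evenly quasiconvex (EQC). Then for every x ∈ L⁰, π(x) is the least upper bound, in the a.e. order on L̄⁰, of the family {R(x·x′, x′) : x′ ∈ L⁰}, where R(Y, x′) is the greatest lower bound in the a.e. order of {π(ξ) : ξ ∈ L⁰, ξ·x′ ≥ Y a.s.}. -/
open MeasureTheory
open scoped Classical

variable {Ω : Type*} [MeasurableSpace Ω]

/-- `f ≤ g` almost everywhere (the a.e. order on `L̄⁰`). -/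
def AELE (μ : Measure Ω) (f g : Ω → EReal) : Prop := ∀ᵐ ω ∂μ, f ω ≤ g ω

/-- `g` is the greatest lower bound, in the a.e. order, of the family `S ⊆ L̄⁰`.
(For `S = ∅` this forces `g = +∞` a.e., which is the paper's convention.) -/
def IsAEGLB (μ : Measure Ω) (S : Set (Ω → EReal)) (g : Ω → EReal) : Prop :=
  (∀ f ∈ S, AELE μ g f) ∧ ∀ h : Ω → EReal, (∀ f ∈ S, AELE μ h f) → AELE μ h g

/-- `g` is the least upper bound, in the a.e. order, of the family `S ⊆ L̄⁰`. -/
def IsAELUB (μ : Measure Ω) (S : Set (Ω → EReal)) (g : Ω → EReal) : Prop :=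
  (∀ f ∈ S, AELE μ f g) ∧ ∀ h : Ω → EReal, (∀ f ∈ S, AELE μ f h) → AELE μ g h

/-- Regularity (REG): `π (x·1_A + y·1_{Aᶜ}) = π x · 1_A + π y · 1_{Aᶜ}` for all
`x, y ∈ L⁰` and measurable `A`, expressed via an arbitrary representative `z` of
`x·1_A + y·1_{Aᶜ}`. -/
def Reg (μ : Measure Ω) (π : (Ω →ₘ[μ] ℝ) → Ω → EReal) : Prop :=
  ∀ (x y : Ω →ₘ[μ] ℝ) (A : Set Ω), MeasurableSet A →
    ∀ z : Ω →ₘ[μ] ℝ, (∀ᵐ ω ∂μ, z ω = if ω ∈ A then x ω else y ω) →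
      ∀ᵐ ω ∂μ, π z ω = if ω ∈ A then π x ω else π y ω

/-- `U` is (a version of) the maximal set `Υ_π` on which `π ≡ +∞`; its complement
is `T_π`. -/
def IsMaxInfty (μ : Measure Ω) (π : (Ω →ₘ[μ] ℝ) → Ω → EReal) (U : Set Ω) : Prop :=
  MeasurableSet U ∧ (∀ ξ : Ω →ₘ[μ] ℝ, ∀ᵐ ω ∂μ, ω ∈ U → π ξ ω = ⊤) ∧
    ∀ B : Set Ω, MeasurableSet B → (∀ ξ : Ω →ₘ[μ] ℝ, ∀ᵐ ω ∂μ, ω ∈ B → π ξ ω = ⊤) →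
      μ (B \ U) = 0

/-- The lower level set `U_Y = {ξ ∈ L⁰ ∣ π(ξ)·1_T ≤ Y}` (with the convention
`(+∞)·0 = 0` off `T`). -/
def levelSet (μ : Measure Ω) (π : (Ω →ₘ[μ] ℝ) → Ω → EReal) (T : Set Ω)
    (Y : Ω →ₘ[μ] ℝ) : Set (Ω →ₘ[μ] ℝ) :=
  {ξ | ∀ᵐ ω ∂μ, (if ω ∈ T then π ξ ω else 0) ≤ (Y ω : EReal)}

/-- `S ⊆ L⁰` is `L⁰`-convex. -/
def L0Convex (μ : Measure Ω) (S : Set (Ω →ₘ[μ] ℝ)) : Prop :=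
  ∀ x ∈ S, ∀ y ∈ S, ∀ Λ : Ω →ₘ[μ] ℝ, (∀ᵐ ω ∂μ, 0 ≤ Λ ω ∧ Λ ω ≤ 1) →
    Λ * x + (1 - Λ) * y ∈ S

/-- The family `{π ξ ∣ ξ ∈ L⁰, ξ·x' ≥ Y a.s.}` whose a.e.-greatest lower bound
is `R(Y, x')`. -/
def RFamily (μ : Measure Ω) (π : (Ω →ₘ[μ] ℝ) → Ω → EReal) (Y x' : Ω →ₘ[μ] ℝ) :
    Set (Ω → EReal) :=
  {g | ∃ ξ : Ω →ₘ[μ] ℝ, (∀ᵐ ω ∂μ, Y ω ≤ ξ ω * x' ω) ∧ g = π ξ}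

/-!
The inequality `R(x·x', x') ≤ π x` is immediate, since `x` itself is admissible in the
family defining `R(x·x', x')`. For the converse it suffices to find, for every level `Y`,
a single dual element `x''` such that `π ξ ≥ Y` on `{Y < π x}` whenever `ξ·x'' ≥ x·x''`.
By EQC, the level set `C = U_Y` is an intersection of conditional half-spaces
`{ξ·p < Y_p on D_C}`, and regularity makes membership in `C` a local property, so the two
descriptions of `C` agree on every measurable piece of `Ω`. On `A_C` one gets `π x ≤ Y`
for free. On the part of `D_C` where `π x > Y`, the point `x` is locally cut off from `C`:
every non-null piece meets some `{Y_p ≤ x·p}` non-trivially. A measure exhaustion picks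
countably many `p` covering this part, and gluing them along the pieces yields `x''`.
-/

namespace MeasureTheory.AEEqFun

variable {β : Type*} [TopologicalSpace β] {μ : Measure Ω}

noncomputable def piecewise (s : Set Ω) (hs : MeasurableSet s) (f g : Ω →ₘ[μ] β) : Ω →ₘ[μ] β :=
  AEEqFun.mk (s.piecewise f g)
    (f.stronglyMeasurable.piecewise hs g.stronglyMeasurable).aestronglyMeasurable

theorem coeFn_piecewise (s : Set Ω) (hs : MeasurableSet s) (f g : Ω →ₘ[μ] β) :
    ∀ᵐ ω ∂μ, piecewise s hs f g ω = if ω ∈ s then f ω else g ω := by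
  filter_upwards [coeFn_mk (μ := μ) (s.piecewise f g)
    (f.stronglyMeasurable.piecewise hs g.stronglyMeasurable).aestronglyMeasurable] with ω hω
  rw [piecewise, hω, Set.piecewise]

end MeasureTheory.AEEqFun

theorem exists_aeeqFun_eq_on_biUnion {μ : Measure Ω} {ι : Type*} {J : Set ι}
    (hJ : J.Countable) (S : ι → Set Ω) (hS : ∀ i, MeasurableSet (S i))
    (g : ι → Ω →ₘ[μ] ℝ) :
    ∃ y : Ω →ₘ[μ] ℝ, ∀ᵐ ω ∂μ, ∀ i ∈ J, ω ∈ S i → ∃ j ∈ J, ω ∈ S j ∧ y ω = g j ω := by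
  rcases J.eq_empty_or_nonempty with rfl | hne
  · exact ⟨0, ae_of_all _ fun ω i hi => absurd hi (Set.notMem_empty i)⟩
  obtain ⟨f, rfl⟩ := hJ.exists_eq_range hne
  have hfind : ∀ ω, ∃ n, ω ∈ S (f n) ∨ ω ∉ ⋃ n, S (f n) := fun ω => by
    by_cases h : ω ∈ ⋃ n, S (f n)
    · obtain ⟨n, hn⟩ := Set.mem_iUnion.1 h
      exact ⟨n, .inl hn⟩
    · exact ⟨0, .inr h⟩
  have hmeas : Measurable fun ω => g (f (Nat.find (hfind ω))) ω :=
    Measurable.find (p := fun n ω => ω ∈ S (f n) ∨ ω ∉ ⋃ m, S (f m))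
      (fun n => (g (f n)).measurable) (fun n => (hS _).union (MeasurableSet.iUnion fun m => hS (f m)).compl) hfind
  refine ⟨AEEqFun.mk _ hmeas.aestronglyMeasurable, ?_⟩
  filter_upwards [AEEqFun.coeFn_mk _ hmeas.aestronglyMeasurable] with ω hω
  rintro _ ⟨n, rfl⟩ hn
  exact ⟨f (Nat.find (hfind ω)), ⟨_, rfl⟩,
    (Nat.find_spec (hfind ω)).resolve_right (not_not.2 (Set.mem_iUnion.2 ⟨n, hn⟩)), hω⟩

theorem exists_countable_measure_diff_biUnion_eq_zero (μ : Measure Ω) [IsFiniteMeasure μ]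
    {B : Set Ω} (hB : MeasurableSet B) {ι : Type*} (S : ι → Set Ω)
    (hS : ∀ i, MeasurableSet (S i))
    (h : ∀ F, MeasurableSet F → F ⊆ B → (∀ i, μ (F ∩ S i) = 0) → μ F = 0) :
    ∃ J : Set ι, J.Countable ∧ μ (B \ ⋃ i ∈ J, S i) = 0 := by
  set m : Set ι → ENNReal := fun J => μ (B ∩ ⋃ i ∈ J, S i)
  obtain ⟨u, -, hu, hmem⟩ := exists_seq_tendsto_sSup (S := m '' {J | J.Countable})
    ⟨_, ∅, Set.countable_empty, rfl⟩ (OrderTop.bddAbove _)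
  choose J hJc hJ using hmem
  -- `⋃ k, J k` attains the supremum of `m` over countable families.
  have hc : (⋃ k, J k).Countable := Set.countable_iUnion hJc
  set T := ⋃ i ∈ ⋃ k, J k, S i
  have hT : MeasurableSet T := .biUnion hc fun i _ => hS i
  have hsup : sSup (m '' {J | J.Countable}) ≤ m (⋃ k, J k) :=
    le_of_tendsto' hu fun k => hJ k ▸ measure_mono (Set.inter_subset_inter_right _
      (Set.biUnion_subset_biUnion_left (Set.subset_iUnion J k)))
  refine ⟨⋃ k, J k, hc, ?_⟩
  by_contra hne
  obtain ⟨i, hi⟩ : ∃ i, μ ((B \ T) ∩ S i) ≠ 0 := by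
    by_contra! hall
    exact hne (h _ (hB.diff hT) Set.sdiff_subset hall)
  have hgain : m (⋃ k, J k) + μ ((B \ T) ∩ S i) ≤ m (insert i (⋃ k, J k)) := by
    rw [← measure_union (Set.disjoint_left.2 fun ω h1 h2 => h2.1.2 h1.2)
      ((hB.diff hT).inter (hS i))]
    refine measure_mono ?_
    rw [Set.biUnion_insert]
    rintro ω (⟨hB, hT⟩ | ⟨⟨hB, -⟩, hS⟩)
    exacts [⟨hB, .inr hT⟩, ⟨hB, .inl hS⟩]
  have hle : m (insert i (⋃ k, J k)) ≤ sSup (m '' {J | J.Countable}) :=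
    le_sSup ⟨_, hc.insert i, rfl⟩
  exact (ENNReal.lt_add_right (measure_ne_top μ _) hi).not_ge (hgain.trans (hle.trans hsup))

theorem aele_of_forall_rat {μ : Measure Ω} {f g : Ω → EReal}
    (h : ∀ q : ℚ, ∀ᵐ ω ∂μ, ((q : ℝ) : EReal) < f ω → ((q : ℝ) : EReal) ≤ g ω) :
    AELE μ f g := by
  filter_upwards [ae_all_iff.2 h] with ω hω
  by_contra! hlt
  obtain ⟨q, hgq, hqf⟩ := EReal.exists_rat_btwn_of_lt hlt
  exact (hω q hqf).not_gt hgq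

theorem IsAEGLB.ae_le_of_forall {μ : Measure Ω} {S : Set (Ω → EReal)} {g : Ω → EReal}
    (hg : IsAEGLB μ S g) {P : Ω → Prop} {c : Ω → EReal}
    (h : ∀ f ∈ S, ∀ᵐ ω ∂μ, P ω → c ω ≤ f ω) : ∀ᵐ ω ∂μ, P ω → c ω ≤ g ω := by
  have hlb : AELE μ (fun ω => if P ω then c ω else ⊥) g :=
    hg.2 _ fun f hf => by
      filter_upwards [h f hf] with ω hω
      split_ifs with hE
      exacts [hω hE, bot_le]
  filter_upwards [hlb] with ω hω hE
  simpa only [if_pos hE] using hω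

theorem self_mem_RFamily (μ : Measure Ω) (π : (Ω →ₘ[μ] ℝ) → Ω → EReal) (x x' : Ω →ₘ[μ] ℝ) :
    π x ∈ RFamily μ π (x * x') x' :=
  ⟨x, (AEEqFun.coeFn_mul x x').mono fun _ hω => hω.le, rfl⟩

section LevelSet

variable {μ : Measure Ω} {π : (Ω →ₘ[μ] ℝ) → Ω → EReal} {T : Set Ω} {Y : Ω →ₘ[μ] ℝ}

theorem piecewise_mem_levelSet (hreg : Reg μ π) {F : Set Ω} (hF : MeasurableSet F)
    {ξ η : Ω →ₘ[μ] ℝ} (hξ : ∀ᵐ ω ∂μ, ω ∈ F → ω ∈ T → π ξ ω ≤ Y ω)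
    (hη : η ∈ levelSet μ π T Y) : AEEqFun.piecewise F hF ξ η ∈ levelSet μ π T Y := by
  simp only [levelSet, Set.mem_ofPred_eq] at hη ⊢
  filter_upwards [hreg ξ η F hF _ (AEEqFun.coeFn_piecewise F hF ξ η), hξ, hη]
    with ω hπ hξω hηω
  by_cases hT : ω ∈ T
  · rw [if_pos hT] at hηω ⊢
    rw [hπ]
    split_ifs with hF
    exacts [hξω hF hT, hηω]
  · rwa [if_neg hT] at hηω ⊢

theorem ae_le_of_piecewise_mem_levelSet (hreg : Reg μ π) {F : Set Ω} (hF : MeasurableSet F)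
    {ξ η : Ω →ₘ[μ] ℝ} (h : AEEqFun.piecewise F hF ξ η ∈ levelSet μ π T Y) :
    ∀ᵐ ω ∂μ, ω ∈ F → ω ∈ T → π ξ ω ≤ Y ω := by
  filter_upwards [hreg ξ η F hF _ (AEEqFun.coeFn_piecewise F hF ξ η), h] with ω hπ hω hF hT
  simpa only [hπ, if_pos hF, if_pos hT] using hω

variable {D : Set Ω} {L : Set (Ω →ₘ[μ] ℝ)} {Yf : (Ω →ₘ[μ] ℝ) → Ω →ₘ[μ] ℝ}
  (hreg : Reg μ π)
  (hC : levelSet μ π T Y = ⋂ p ∈ L, {ξ | ∀ᵐ ω ∂μ, ω ∈ D → ξ ω * p ω < Yf p ω})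
  {ξ₀ : Ω →ₘ[μ] ℝ} (hξ₀ : ξ₀ ∈ levelSet μ π T Y)
include hreg hC hξ₀

theorem ae_le_of_forall_halfspace {F : Set Ω} (hF : MeasurableSet F) {ξ : Ω →ₘ[μ] ℝ}
    (hξ : ∀ p ∈ L, ∀ᵐ ω ∂μ, ω ∈ F → ω ∈ D → ξ ω * p ω < Yf p ω) :
    ∀ᵐ ω ∂μ, ω ∈ F → ω ∈ T → π ξ ω ≤ Y ω := by
  refine ae_le_of_piecewise_mem_levelSet hreg hF (η := ξ₀) ?_
  rw [hC] at hξ₀ ⊢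
  refine Set.mem_iInter₂.2 fun p hp => ?_
  rw [Set.mem_ofPred_eq]
  filter_upwards [AEEqFun.coeFn_piecewise F hF ξ ξ₀, hξ p hp, Set.mem_iInter₂.1 hξ₀ p hp]
    with ω hω hξω hξ₀ω hD
  rw [hω]
  split_ifs with hF
  exacts [hξω hF hD, hξ₀ω hD]

theorem ae_le_of_halfspace_ge (hmeas : ∀ ξ : Ω →ₘ[μ] ℝ, Measurable (π ξ)) (ξ : Ω →ₘ[μ] ℝ)
    {p : Ω →ₘ[μ] ℝ} (hp : p ∈ L) :
    ∀ᵐ ω ∂μ, ω ∈ D → Yf p ω ≤ ξ ω * p ω → (Y ω : EReal) ≤ π ξ ω := by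
  have hF : MeasurableSet {ω | π ξ ω < Y ω} :=
    measurableSet_lt (hmeas ξ) Y.measurable.coe_real_ereal
  have hmem := piecewise_mem_levelSet hreg hF (ae_of_all _ fun _ hω _ => le_of_lt hω) hξ₀
  rw [hC] at hmem
  filter_upwards [AEEqFun.coeFn_piecewise _ hF ξ ξ₀, Set.mem_iInter₂.1 hmem p hp]
    with ω hω hlt hD hge
  by_contra! hπ
  have := hlt hD
  rw [hω, if_pos hπ] at this
  exact this.not_ge hge

theorem exists_countable_halfspace_cover [IsFiniteMeasure μ]
    (hmeas : ∀ ξ : Ω →ₘ[μ] ℝ, Measurable (π ξ)) (hD : MeasurableSet D) (hT : MeasurableSet T)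
    (x : Ω →ₘ[μ] ℝ) :
    ∃ J : Set L, J.Countable ∧ ∀ᵐ ω ∂μ, ω ∈ D → ω ∈ T → (Y ω : EReal) < π x ω →
      ∃ p ∈ J, Yf p ω ≤ x ω * (p : Ω →ₘ[μ] ℝ) ω := by
  set B := D ∩ T ∩ {ω | (Y ω : EReal) < π x ω}
  have hB : MeasurableSet B :=
    (hD.inter hT).inter (measurableSet_lt Y.measurable.coe_real_ereal (hmeas x))
  set S : L → Set Ω := fun p => {ω | Yf p ω ≤ x ω * (p : Ω →ₘ[μ] ℝ) ω}
  have hS : ∀ p, MeasurableSet (S p) := fun p =>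
    measurableSet_le (Yf p).measurable (x.measurable.mul (p : Ω →ₘ[μ] ℝ).measurable)
  -- On a piece of `B` missing every `S p`, `x` satisfies all the half-space constraints,
  -- hence `π x ≤ Y` there, contradicting `B ⊆ {Y < π x}`.
  obtain ⟨J, hJ, hcover⟩ := exists_countable_measure_diff_biUnion_eq_zero μ hB S hS
    fun F hF hFB hnull => by
      have hle := ae_le_of_forall_halfspace hreg hC hξ₀ hF fun p hp => by
        filter_upwards [measure_eq_zero_iff_ae_notMem.1 (hnull ⟨p, hp⟩)] with ω hω hF _
        exact lt_of_not_ge fun hS => hω ⟨hF, hS⟩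
      refine measure_eq_zero_iff_ae_notMem.2 ?_
      filter_upwards [hle] with ω hω hF
      exact (hFB hF).2.not_ge (hω hF (hFB hF).1.2)
  refine ⟨J, hJ, ?_⟩
  filter_upwards [measure_eq_zero_iff_ae_notMem.1 hcover] with ω hω hDω hTω hlt
  obtain ⟨p, hpJ, hp⟩ := Set.mem_iUnion₂.1 (not_not.1 fun h => hω ⟨⟨⟨hDω, hTω⟩, hlt⟩, h⟩)
  exact ⟨p, hpJ, hp⟩

end LevelSet

section Representation

variable {μ : Measure Ω} [IsFiniteMeasure μ] {π : (Ω →ₘ[μ] ℝ) → Ω → EReal}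
  (hmeas : ∀ ξ : Ω →ₘ[μ] ℝ, Measurable (π ξ)) (hreg : Reg μ π)
  {U : Set Ω} (hU : IsMaxInfty μ π U)
  (hEQC : ∀ Y : Ω →ₘ[μ] ℝ, CondEvenlyConvex μ (levelSet μ π Uᶜ Y))
include hmeas hreg hU hEQC

theorem exists_forall_RFamily_ge (x Y : Ω →ₘ[μ] ℝ) :
    ∃ x'' : Ω →ₘ[μ] ℝ, ∀ f ∈ RFamily μ π (x * x'') x'',
      ∀ᵐ ω ∂μ, (Y ω : EReal) < π x ω → (Y ω : EReal) ≤ f ω := by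
  obtain ⟨A, ⟨hA, hAfull, -⟩, L, Yf, hC⟩ := hEQC Y
  obtain ⟨ξ₀, hξ₀, -⟩ := hAfull x
  -- The half-space constraints only bind on `Aᶜ`.
  have hxA : ∀ᵐ ω ∂μ, ω ∈ A → ω ∈ Uᶜ → π x ω ≤ Y ω :=
    ae_le_of_forall_halfspace hreg hC hξ₀ hA fun _ _ => ae_of_all _ fun _ h1 h2 => absurd h1 h2
  obtain ⟨J, hJ, hcover⟩ :=
    exists_countable_halfspace_cover hreg hC hξ₀ hmeas hA.compl hU.1.compl x
  have hS : ∀ p : L, MeasurableSet {ω | Yf p ω ≤ x ω * (p : Ω →ₘ[μ] ℝ) ω} := fun p =>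
    measurableSet_le (Yf p).measurable (x.measurable.mul (p : Ω →ₘ[μ] ℝ).measurable)
  obtain ⟨x'', hx''⟩ := exists_aeeqFun_eq_on_biUnion hJ _ hS (fun p => (p : Ω →ₘ[μ] ℝ))
  refine ⟨x'', ?_⟩
  rintro _ ⟨ξ, hξ, rfl⟩
  have hge := (ae_ball_iff hJ).2 fun (p : L) _ => ae_le_of_halfspace_ge hreg hC hξ₀ hmeas ξ p.2
  filter_upwards [hU.2.1 ξ, hxA, hcover, hx'', hξ, AEEqFun.coeFn_mul x x'', hge] with ω hUω hAω hcovω hx''ω hξω hmul hgeω hlt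
  by_cases hωU : ω ∈ U
  · exact (hUω hωU).symm ▸ le_top
  by_cases hωA : ω ∈ A
  · exact absurd (hAω hωA hωU) hlt.not_ge
  obtain ⟨p, hpJ, hpω⟩ := hcovω hωA hωU hlt
  obtain ⟨p', hp'J, hp'ω, hx''p'⟩ := hx''ω p hpJ hpω
  refine hgeω p' hp'J hωA ?_
  calc Yf p' ω ≤ x ω * (p' : Ω →ₘ[μ] ℝ) ω := hp'ω
    _ = (x * x'') ω := by rw [hmul, Pi.mul_apply, hx''p']
    _ ≤ ξ ω * x'' ω := hξω
    _ = ξ ω * (p' : Ω →ₘ[μ] ℝ) ω := by rw [hx''p']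

end Representation

theorem stmt5_general (μ : Measure Ω) [IsProbabilityMeasure μ]
    (π : (Ω →ₘ[μ] ℝ) → Ω → EReal)
    (hmeas : ∀ ξ : Ω →ₘ[μ] ℝ, Measurable (π ξ))
    (hreg : Reg μ π)
    (U : Set Ω) (hU : IsMaxInfty μ π U)
    (hEQC : ∀ Y : Ω →ₘ[μ] ℝ, CondEvenlyConvex μ (levelSet μ π Uᶜ Y))
    (R : (Ω →ₘ[μ] ℝ) → (Ω →ₘ[μ] ℝ) → Ω → EReal)
    (hR : ∀ Y x' : Ω →ₘ[μ] ℝ, IsAEGLB μ (RFamily μ π Y x') (R Y x'))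
    (x : Ω →ₘ[μ] ℝ) :
    IsAELUB μ {g : Ω → EReal | ∃ x' : Ω →ₘ[μ] ℝ, g = R (x * x') x'} (π x) := by
  refine ⟨fun _ ⟨x', hg⟩ => hg ▸ (hR _ x').1 _ (self_mem_RFamily μ π x x'), fun h hub => ?_⟩
  refine aele_of_forall_rat fun q => ?_
  obtain ⟨x'', hx''⟩ :=
    exists_forall_RFamily_ge hmeas hreg hU hEQC x (AEEqFun.const Ω (q : ℝ))
  filter_upwards [(hR _ x'').ae_le_of_forall hx'', hub _ ⟨x'', rfl⟩, AEEqFun.coeFn_const Ω (q : ℝ)]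
    with ω hRω hubω hY hq
  rw [hY] at hRω
  exact (hRω hq).trans hubω

/-- **Dual representation of conditionally evenly quasiconvex maps.**
Let `π : L⁰ → L̄⁰` be regular (REG) and conditionally evenly quasiconvex (EQC).
Then for every `x ∈ L⁰`, `π x` is the least upper bound, in the a.e. order, of
the family `{R(x·x', x') ∣ x' ∈ L⁰}`, where `R(Y, x')` is the a.e.-greatest
lower bound of `{π ξ ∣ ξ ∈ L⁰, ξ·x' ≥ Y a.s.}`. -/
theorem stmt5 (μ : Measure Ω) [IsProbabilityMeasure μ]
    (π : (Ω →ₘ[μ] ℝ) → Ω → EReal)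
    (hmeas : ∀ ξ : Ω →ₘ[μ] ℝ, Measurable (π ξ))
    (hnbot : ∀ ξ : Ω →ₘ[μ] ℝ, ∀ᵐ ω ∂μ, π ξ ω ≠ ⊥)
    (hreg : Reg μ π)
    (U : Set Ω) (hU : IsMaxInfty μ π U)
    (hEQC : ∀ Y : Ω →ₘ[μ] ℝ, CondEvenlyConvex μ (levelSet μ π Uᶜ Y))
    (R : (Ω →ₘ[μ] ℝ) → (Ω →ₘ[μ] ℝ) → Ω → EReal)
    (hRmeas : ∀ Y x' : Ω →ₘ[μ] ℝ, Measurable (R Y x'))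
    (hR : ∀ Y x' : Ω →ₘ[μ] ℝ, IsAEGLB μ (RFamily μ π Y x') (R Y x'))
    (x : Ω →ₘ[μ] ℝ) :
    IsAELUB μ {g : Ω → EReal | ∃ x' : Ω →ₘ[μ] ℝ, g = R (x * x') x'} (π x) :=
  stmt5_general μ π hmeas hreg U hU hEQC R hR x
end

section
/- Let π : L⁰ → L̄⁰ be regular (REG), let Y, x′ ∈ L⁰ be in the effective domain of R (i.e. there exists ξ ∈ L⁰ with ξ·x′ ≥ Y a.s.), and let A ∈ 𝒢. Then R(Y, x′)·1_A equals the greatest lower bound in the a.e. order of {π(ξ)·1_A : ξ ∈ L⁰, ξ·x′ ≥ Y a.s.}, equals the greatest lower bound of {π(ξ)·1_A : ξ ∈ L⁰, (ξ·1_A)·x′ ≥ Y·1_A a.s.}, and equals R(Y·1_A, x′)·1_A (with the convention (+∞)·0 = 0 off A). -/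
open MeasureTheory
open scoped Classical

variable {Ω : Type*} [MeasurableSpace Ω]

noncomputable def glue (μ : Measure Ω) (A : Set Ω) (hA : MeasurableSet A)
    (x y : Ω →ₘ[μ] ℝ) : Ω →ₘ[μ] ℝ :=
  AEEqFun.mk (A.piecewise x y)
    (AEStronglyMeasurable.piecewise hA x.aestronglyMeasurable.restrict
      y.aestronglyMeasurable.restrict)

lemma glue_spec (μ : Measure Ω) (A : Set Ω) (hA : MeasurableSet A)
    (x y : Ω →ₘ[μ] ℝ) :
    ∀ᵐ ω ∂μ, glue μ A hA x y ω = if ω ∈ A then x ω else y ω :=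
  AEEqFun.coeFn_mk _ _

lemma key (μ : Measure Ω)
    (π : (Ω →ₘ[μ] ℝ) → Ω → EReal) (hreg : Reg μ π)
    (R : (Ω →ₘ[μ] ℝ) → (Ω →ₘ[μ] ℝ) → Ω → EReal)
    (hR : ∀ Y x' : Ω →ₘ[μ] ℝ, IsAEGLB μ (RFamily μ π Y x') (R Y x'))
    (Y x' : Ω →ₘ[μ] ℝ)
    (hdom : ∃ ξ : Ω →ₘ[μ] ℝ, ∀ᵐ ω ∂μ, Y ω ≤ ξ ω * x' ω)
    (A : Set Ω) (hA : MeasurableSet A) :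
    IsAEGLB μ
        {g : Ω → EReal | ∃ ξ : Ω →ₘ[μ] ℝ, (∀ᵐ ω ∂μ, Y ω ≤ ξ ω * x' ω) ∧
          g = fun ω => if ω ∈ A then π ξ ω else 0}
        (fun ω => if ω ∈ A then R Y x' ω else 0) ∧
      IsAEGLB μ
        {g : Ω → EReal | ∃ ξ : Ω →ₘ[μ] ℝ, (∀ᵐ ω ∂μ, ω ∈ A → Y ω ≤ ξ ω * x' ω) ∧
          g = fun ω => if ω ∈ A then π ξ ω else 0}
        (fun ω => if ω ∈ A then R Y x' ω else 0) := by
  obtain ⟨ξ₀, hξ₀⟩ := hdom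
  -- lower bound for the bigger (second) family
  have lb2 : ∀ f ∈ {g : Ω → EReal | ∃ ξ : Ω →ₘ[μ] ℝ,
      (∀ᵐ ω ∂μ, ω ∈ A → Y ω ≤ ξ ω * x' ω) ∧
        g = fun ω => if ω ∈ A then π ξ ω else 0},
      AELE μ (fun ω => if ω ∈ A then R Y x' ω else 0) f := by
    rintro f ⟨ξ, hξ, rfl⟩
    set ζ := glue μ A hA ξ ξ₀ with hζ
    have hζeq := glue_spec μ A hA ξ ξ₀
    have hζdom : ∀ᵐ ω ∂μ, Y ω ≤ ζ ω * x' ω := by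
      filter_upwards [hζeq, hξ, hξ₀] with ω h1 h2 h3
      by_cases hm : ω ∈ A
      · rw [h1, if_pos hm]; exact h2 hm
      · rw [h1, if_neg hm]; exact h3
    have hπζ := hreg ξ ξ₀ A hA ζ hζeq
    have hRle : AELE μ (R Y x') (π ζ) := (hR Y x').1 _ ⟨ζ, hζdom, rfl⟩
    filter_upwards [hπζ, hRle] with ω h1 h2
    by_cases hm : ω ∈ A
    · simp only [if_pos hm] at h1 ⊢
      exact h2.trans_eq h1
    · simp only [if_neg hm]; exact le_refl _
  -- greatest property for the smaller (first) family
  have glb1 : ∀ h : Ω → EReal,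
      (∀ f ∈ {g : Ω → EReal | ∃ ξ : Ω →ₘ[μ] ℝ,
        (∀ᵐ ω ∂μ, Y ω ≤ ξ ω * x' ω) ∧
          g = fun ω => if ω ∈ A then π ξ ω else 0}, AELE μ h f) →
      AELE μ h (fun ω => if ω ∈ A then R Y x' ω else 0) := by
    intro h hh
    have h0 : AELE μ h (fun ω => if ω ∈ A then π ξ₀ ω else 0) :=
      hh _ ⟨ξ₀, hξ₀, rfl⟩
    set h' : Ω → EReal := fun ω => if ω ∈ A then h ω else ⊥ with hh'
    have hlb : ∀ f ∈ RFamily μ π Y x', AELE μ h' f := by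
      rintro f ⟨ξ, hξ, rfl⟩
      have := hh _ ⟨ξ, hξ, rfl⟩
      filter_upwards [this] with ω hω
      by_cases hm : ω ∈ A
      · simp only [hh', if_pos hm] at *
        exact hω
      · simp only [hh', if_neg hm]; exact bot_le
    have hle : AELE μ h' (R Y x') := (hR Y x').2 h' hlb
    filter_upwards [hle, h0] with ω h1 h2
    by_cases hm : ω ∈ A
    · rw [if_pos hm]
      simpa [hh', hm] using h1
    · rw [if_neg hm]
      simpa [hm] using h2
  refine ⟨⟨fun f hf => ?_, glb1⟩, ⟨lb2, fun h hh => glb1 h fun f hf => ?_⟩⟩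
  · obtain ⟨ξ, hξ, rfl⟩ := hf
    exact lb2 _ ⟨ξ, hξ.mono fun ω h _ => h, rfl⟩
  · obtain ⟨ξ, hξ, rfl⟩ := hf
    exact hh _ ⟨ξ, hξ.mono fun ω h _ => h, rfl⟩

/-- **Localization of `R` on a set `A` (property (iv)).**  Let `π : L⁰ → L̄⁰` be
regular (REG), let `(Y, x')` be in the effective domain of `R`, and let `A ∈ 𝒢`.
Then `R(Y,x')·1_A` is the a.e.-greatest lower bound of
`{π(ξ)·1_A ∣ ξ·x' ≥ Y a.s.}`, also of `{π(ξ)·1_A ∣ (ξ·1_A)·x' ≥ Y·1_A a.s.}`,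
and it equals `R(Y·1_A, x')·1_A` (with the convention `(+∞)·0 = 0` off `A`). -/
theorem stmt9 (μ : Measure Ω) [IsProbabilityMeasure μ]
    (π : (Ω →ₘ[μ] ℝ) → Ω → EReal)
    (hmeas : ∀ ξ : Ω →ₘ[μ] ℝ, Measurable (π ξ))
    (hnbot : ∀ ξ : Ω →ₘ[μ] ℝ, ∀ᵐ ω ∂μ, π ξ ω ≠ ⊥)
    (hreg : Reg μ π)
    (R : (Ω →ₘ[μ] ℝ) → (Ω →ₘ[μ] ℝ) → Ω → EReal)
    (hR : ∀ Y x' : Ω →ₘ[μ] ℝ, IsAEGLB μ (RFamily μ π Y x') (R Y x'))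
    (Y x' : Ω →ₘ[μ] ℝ)
    (hdom : ∃ ξ : Ω →ₘ[μ] ℝ, ∀ᵐ ω ∂μ, Y ω ≤ ξ ω * x' ω)
    (A : Set Ω) (hA : MeasurableSet A) :
    IsAEGLB μ
        {g : Ω → EReal | ∃ ξ : Ω →ₘ[μ] ℝ, (∀ᵐ ω ∂μ, Y ω ≤ ξ ω * x' ω) ∧
          g = fun ω => if ω ∈ A then π ξ ω else 0}
        (fun ω => if ω ∈ A then R Y x' ω else 0) ∧
      IsAEGLB μ
        {g : Ω → EReal | ∃ ξ : Ω →ₘ[μ] ℝ, (∀ᵐ ω ∂μ, ω ∈ A → Y ω ≤ ξ ω * x' ω) ∧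
          g = fun ω => if ω ∈ A then π ξ ω else 0}
        (fun ω => if ω ∈ A then R Y x' ω else 0) ∧
      ∀ Z : Ω →ₘ[μ] ℝ, (∀ᵐ ω ∂μ, Z ω = if ω ∈ A then Y ω else 0) →
        ∀ᵐ ω ∂μ,
          (if ω ∈ A then R Y x' ω else 0) = (if ω ∈ A then R Z x' ω else 0) := by
  
  obtain ⟨c1, c2⟩ := key μ π hreg R hR Y x' hdom A hA
  refine ⟨c1, c2, ?_⟩
  intro Z hZ
  obtain ⟨ξ₀, hξ₀⟩ := hdom
  have hdomZ : ∃ ξ : Ω →ₘ[μ] ℝ, ∀ᵐ ω ∂μ, Z ω ≤ ξ ω * x' ω := by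
    refine ⟨glue μ A hA ξ₀ 0, ?_⟩
    have h0 : ∀ᵐ ω ∂μ, (0 : Ω →ₘ[μ] ℝ) ω = 0 := AEEqFun.coeFn_zero
    filter_upwards [glue_spec μ A hA ξ₀ 0, hZ, hξ₀, h0] with ω h1 h2 h3 h4
    by_cases hm : ω ∈ A
    · rw [h1, if_pos hm, h2, if_pos hm]; exact h3
    · rw [h1, if_neg hm, h2, if_neg hm, h4]; simp
  obtain ⟨-, c2Z⟩ := key μ π hreg R hR Z x' hdomZ A hA
  have hset : {g : Ω → EReal | ∃ ξ : Ω →ₘ[μ] ℝ,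
        (∀ᵐ ω ∂μ, ω ∈ A → Z ω ≤ ξ ω * x' ω) ∧
          g = fun ω => if ω ∈ A then π ξ ω else 0} =
      {g : Ω → EReal | ∃ ξ : Ω →ₘ[μ] ℝ,
        (∀ᵐ ω ∂μ, ω ∈ A → Y ω ≤ ξ ω * x' ω) ∧
          g = fun ω => if ω ∈ A then π ξ ω else 0} := by
    ext g
    constructor
    · rintro ⟨ξ, hξ, rfl⟩
      refine ⟨ξ, ?_, rfl⟩
      filter_upwards [hξ, hZ] with ω h1 h2 hm
      have := h1 hm
      rwa [h2, if_pos hm] at this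
    · rintro ⟨ξ, hξ, rfl⟩
      refine ⟨ξ, ?_, rfl⟩
      filter_upwards [hξ, hZ] with ω h1 h2 hm
      rw [h2, if_pos hm]
      exact h1 hm
  rw [hset] at c2Z
  have le1 := c2.2 _ c2Z.1
  have le2 := c2Z.2 _ c2.1
  filter_upwards [le1, le2] with ω h1 h2
  exact le_antisymm h2 h1
end

section
/- Let π : L⁰ → L̄⁰ be regular (REG), x′ ∈ L⁰, and X₁, X₂ ∈ L⁰. Then R(min(X₁·x′, X₂·x′), x′) = min{R(X₁·x′, x′), R(X₂·x′, x′)} a.s. and R(max(X₁·x′, X₂·x′), x′) = max{R(X₁·x′, x′), R(X₂·x′, x′)} a.s., where min and max are taken pointwise a.e. -/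
open MeasureTheory
open scoped Classical

variable {Ω : Type*} [MeasurableSpace Ω]

/-- **Lattice property of `R` (property (v)).**  Let `π : L⁰ → L̄⁰` be regular
(REG), `x', X₁, X₂ ∈ L⁰`.  Then `R(X₁·x' ∧ X₂·x', x') = R(X₁·x', x') ∧ R(X₂·x', x')`
and `R(X₁·x' ∨ X₂·x', x') = R(X₁·x', x') ∨ R(X₂·x', x')` a.s. -/
theorem stmt10 (μ : Measure Ω) [IsProbabilityMeasure μ]
    (π : (Ω →ₘ[μ] ℝ) → Ω → EReal)
    (hmeas : ∀ ξ : Ω →ₘ[μ] ℝ, Measurable (π ξ))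
    (hnbot : ∀ ξ : Ω →ₘ[μ] ℝ, ∀ᵐ ω ∂μ, π ξ ω ≠ ⊥)
    (hreg : Reg μ π)
    (R : (Ω →ₘ[μ] ℝ) → (Ω →ₘ[μ] ℝ) → Ω → EReal)
    (hR : ∀ Y x' : Ω →ₘ[μ] ℝ, IsAEGLB μ (RFamily μ π Y x') (R Y x'))
    (x' X₁ X₂ : Ω →ₘ[μ] ℝ) :
    (∀ Z : Ω →ₘ[μ] ℝ, (∀ᵐ ω ∂μ, Z ω = min (X₁ ω * x' ω) (X₂ ω * x' ω)) →
        ∀ᵐ ω ∂μ, R Z x' ω = min (R (X₁ * x') x' ω) (R (X₂ * x') x' ω)) ∧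
      (∀ Z : Ω →ₘ[μ] ℝ, (∀ᵐ ω ∂μ, Z ω = max (X₁ ω * x' ω) (X₂ ω * x' ω)) →
        ∀ᵐ ω ∂μ, R Z x' ω = max (R (X₁ * x') x' ω) (R (X₂ * x') x' ω)) := by
  classical
  set Y₁ := X₁ * x' with hY₁def
  set Y₂ := X₂ * x' with hY₂def
  have hY₁c : ∀ᵐ ω ∂μ, Y₁ ω = X₁ ω * x' ω := AEEqFun.coeFn_mul X₁ x'
  have hY₂c : ∀ᵐ ω ∂μ, Y₂ ω = X₂ ω * x' ω := AEEqFun.coeFn_mul X₂ x'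
  have hm₁ : AEMeasurable (Y₁ : Ω → ℝ) μ := Y₁.aestronglyMeasurable.aemeasurable
  have hm₂ : AEMeasurable (Y₂ : Ω → ℝ) μ := Y₂.aestronglyMeasurable.aemeasurable
  set W₁ := hm₁.mk _ with hW₁def
  set W₂ := hm₂.mk _ with hW₂def
  have hW₁ : (Y₁ : Ω → ℝ) =ᵐ[μ] W₁ := hm₁.ae_eq_mk
  have hW₂ : (Y₂ : Ω → ℝ) =ᵐ[μ] W₂ := hm₂.ae_eq_mk
  set A := {ω | W₁ ω ≤ W₂ ω} with hAdef
  have hA : MeasurableSet A := measurableSet_le hm₁.measurable_mk hm₂.measurable_mk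
  -- gluing construction
  have comb : ∀ ξ ζ : Ω →ₘ[μ] ℝ, ∃ η : Ω →ₘ[μ] ℝ,
      ∀ᵐ ω ∂μ, η ω = if ω ∈ A then ξ ω else ζ ω := by
    intro ξ ζ
    refine ⟨AEEqFun.mk (A.piecewise ξ ζ)
      (AEStronglyMeasurable.piecewise hA ξ.aestronglyMeasurable.restrict
        ζ.aestronglyMeasurable.restrict), ?_⟩
    filter_upwards [AEEqFun.coeFn_mk (A.piecewise ξ ζ) _] with ω h
    rw [h]
    by_cases hω : ω ∈ A <;> simp [Set.piecewise, hω]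
  -- monotonicity of R
  have mono : ∀ Z Y : Ω →ₘ[μ] ℝ, (∀ᵐ ω ∂μ, Z ω ≤ Y ω) →
      ∀ᵐ ω ∂μ, R Z x' ω ≤ R Y x' ω := by
    intro Z Y hZY
    refine (hR Y x').2 _ ?_
    rintro g ⟨ξ, hξ, rfl⟩
    refine (hR Z x').1 _ ⟨ξ, ?_, rfl⟩
    filter_upwards [hξ, hZY] with ω h1 h2
    exact h2.trans h1
  constructor
  · -- min case
    intro Z hZ
    have hle1 : ∀ᵐ ω ∂μ, R Z x' ω ≤ R Y₁ x' ω := by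
      refine mono Z Y₁ ?_
      filter_upwards [hZ, hY₁c] with ω h1 h2
      rw [h1, h2]; exact min_le_left _ _
    have hle2 : ∀ᵐ ω ∂μ, R Z x' ω ≤ R Y₂ x' ω := by
      refine mono Z Y₂ ?_
      filter_upwards [hZ, hY₂c] with ω h1 h2
      rw [h1, h2]; exact min_le_right _ _
    have hlb : ∀ g ∈ RFamily μ π Z x',
        AELE μ (fun ω => min (R Y₁ x' ω) (R Y₂ x' ω)) g := by
      rintro g ⟨ξ, hξ, rfl⟩
      obtain ⟨η₁, hη₁⟩ := comb ξ X₁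
      obtain ⟨η₂, hη₂⟩ := comb X₂ ξ
      have hη₁x : ∀ᵐ ω ∂μ, η₁ ω * x' ω = if ω ∈ A then ξ ω * x' ω else X₁ ω * x' ω := by
        filter_upwards [hη₁] with ω h
        by_cases hω : ω ∈ A <;> simp [h, hω]
      have hη₂x : ∀ᵐ ω ∂μ, η₂ ω * x' ω = if ω ∈ A then X₂ ω * x' ω else ξ ω * x' ω := by
        filter_upwards [hη₂] with ω h
        by_cases hω : ω ∈ A <;> simp [h, hω]
      have hmem₁ : ∀ᵐ ω ∂μ, Y₁ ω ≤ η₁ ω * x' ω := by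
        filter_upwards [hη₁x, hξ, hZ, hY₁c, hY₂c, hW₁, hW₂] with ω e1 e2 e3 e4 e5 w1 w2
        rw [e1]
        by_cases hω : ω ∈ A
        · simp only [hω, if_pos]
          have hmin : min (X₁ ω * x' ω) (X₂ ω * x' ω) = X₁ ω * x' ω := by
            have : W₁ ω ≤ W₂ ω := hω
            rw [← w1, ← w2, e4, e5] at this
            exact min_eq_left this
          rw [e4, ← hmin, ← e3]; exact e2
        · simp only [hω, if_neg, not_false_iff]
          rw [e4]
      have hmem₂ : ∀ᵐ ω ∂μ, Y₂ ω ≤ η₂ ω * x' ω := by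
        filter_upwards [hη₂x, hξ, hZ, hY₁c, hY₂c, hW₁, hW₂] with ω e1 e2 e3 e4 e5 w1 w2
        rw [e1]
        by_cases hω : ω ∈ A
        · simp only [hω, if_pos]; rw [e5]
        · simp only [hω, if_neg, not_false_iff]
          have hle : W₂ ω ≤ W₁ ω := le_of_not_ge hω
          rw [← w1, ← w2, e4, e5] at hle
          have hmin : min (X₁ ω * x' ω) (X₂ ω * x' ω) = X₂ ω * x' ω := min_eq_right hle
          rw [e5, ← hmin, ← e3]; exact e2
      have hR1 : ∀ᵐ ω ∂μ, R Y₁ x' ω ≤ π η₁ ω := (hR Y₁ x').1 _ ⟨η₁, hmem₁, rfl⟩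
      have hR2 : ∀ᵐ ω ∂μ, R Y₂ x' ω ≤ π η₂ ω := (hR Y₂ x').1 _ ⟨η₂, hmem₂, rfl⟩
      have hreg1 := hreg ξ X₁ A hA η₁ hη₁
      have hreg2 := hreg X₂ ξ A hA η₂ hη₂
      filter_upwards [hR1, hR2, hreg1, hreg2] with ω r1 r2 g1 g2
      by_cases hω : ω ∈ A
      · refine le_trans (min_le_left _ _) ?_
        rw [g1, if_pos hω] at r1; exact r1
      · refine le_trans (min_le_right _ _) ?_
        rw [g2, if_neg hω] at r2; exact r2
    have hge := (hR Z x').2 _ hlb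
    filter_upwards [hle1, hle2, hge] with ω h1 h2 h3
    exact le_antisymm (le_min h1 h2) h3
  · -- max case
    intro Z hZ
    have hge1 : ∀ᵐ ω ∂μ, R Y₁ x' ω ≤ R Z x' ω := by
      refine mono Y₁ Z ?_
      filter_upwards [hZ, hY₁c] with ω h1 h2
      rw [h1, h2]; exact le_max_left _ _
    have hge2 : ∀ᵐ ω ∂μ, R Y₂ x' ω ≤ R Z x' ω := by
      refine mono Y₂ Z ?_
      filter_upwards [hZ, hY₂c] with ω h1 h2
      rw [h1, h2]; exact le_max_right _ _
    -- on A : R Z ≤ R Y₂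
    have honA : ∀ᵐ ω ∂μ,
        (if ω ∈ A then R Z x' ω else (⊥ : EReal)) ≤ R Y₂ x' ω := by
      refine (hR Y₂ x').2 _ ?_
      rintro g ⟨ζ, hζ, rfl⟩
      obtain ⟨η, hη⟩ := comb ζ X₁
      have hmem : ∀ᵐ ω ∂μ, Z ω ≤ η ω * x' ω := by
        filter_upwards [hη, hζ, hZ, hY₁c, hY₂c, hW₁, hW₂] with ω e1 e2 e3 e4 e5 w1 w2
        by_cases hω : ω ∈ A
        · rw [e1, if_pos hω]
          have hle : W₁ ω ≤ W₂ ω := hω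
          rw [← w1, ← w2, e4, e5] at hle
          have hmax : max (X₁ ω * x' ω) (X₂ ω * x' ω) = X₂ ω * x' ω := max_eq_right hle
          rw [e3, hmax, ← e5]; exact e2
        · rw [e1, if_neg hω]
          have hle : W₂ ω ≤ W₁ ω := le_of_not_ge hω
          rw [← w1, ← w2, e4, e5] at hle
          have hmax : max (X₁ ω * x' ω) (X₂ ω * x' ω) = X₁ ω * x' ω := max_eq_left hle
          rw [e3, hmax]
      have hRZ : ∀ᵐ ω ∂μ, R Z x' ω ≤ π η ω := (hR Z x').1 _ ⟨η, hmem, rfl⟩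
      have hregη := hreg ζ X₁ A hA η hη
      filter_upwards [hRZ, hregη] with ω r1 g1
      by_cases hω : ω ∈ A
      · rw [if_pos hω]; rw [g1, if_pos hω] at r1; exact r1
      · rw [if_neg hω]; exact bot_le
    -- off A : R Z ≤ R Y₁
    have hoffA : ∀ᵐ ω ∂μ,
        (if ω ∈ A then (⊥ : EReal) else R Z x' ω) ≤ R Y₁ x' ω := by
      refine (hR Y₁ x').2 _ ?_
      rintro g ⟨ζ, hζ, rfl⟩
      obtain ⟨η, hη⟩ := comb X₂ ζ
      have hmem : ∀ᵐ ω ∂μ, Z ω ≤ η ω * x' ω := by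
        filter_upwards [hη, hζ, hZ, hY₁c, hY₂c, hW₁, hW₂] with ω e1 e2 e3 e4 e5 w1 w2
        by_cases hω : ω ∈ A
        · rw [e1, if_pos hω]
          have hle : W₁ ω ≤ W₂ ω := hω
          rw [← w1, ← w2, e4, e5] at hle
          have hmax : max (X₁ ω * x' ω) (X₂ ω * x' ω) = X₂ ω * x' ω := max_eq_right hle
          rw [e3, hmax]
        · rw [e1, if_neg hω]
          have hle : W₂ ω ≤ W₁ ω := le_of_not_ge hω
          rw [← w1, ← w2, e4, e5] at hle
          have hmax : max (X₁ ω * x' ω) (X₂ ω * x' ω) = X₁ ω * x' ω := max_eq_left hle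
          rw [e3, hmax, ← e4]; exact e2
      have hRZ : ∀ᵐ ω ∂μ, R Z x' ω ≤ π η ω := (hR Z x').1 _ ⟨η, hmem, rfl⟩
      have hregη := hreg X₂ ζ A hA η hη
      filter_upwards [hRZ, hregη] with ω r1 g1
      by_cases hω : ω ∈ A
      · rw [if_pos hω]; exact bot_le
      · rw [if_neg hω]; rw [g1, if_neg hω] at r1; exact r1
    filter_upwards [hge1, hge2, honA, hoffA] with ω h1 h2 h3 h4
    refine le_antisymm ?_ (max_le h1 h2)
    by_cases hω : ω ∈ A
    · rw [if_pos hω] at h3; exact h3.trans (le_max_right _ _)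
    · rw [if_neg hω] at h4; exact h4.trans (le_max_left _ _)
end

section
/- Let π : L⁰ → L̄⁰ be regular (REG) and x′ ∈ L⁰. The map X ↦ R(X·x′, x′) is quasi-affine: for all X₁, X₂ ∈ L⁰ and all 𝒢-measurable Λ with 0 ≤ Λ ≤ 1 a.s., one has min{R(X₁·x′, x′), R(X₂·x′, x′)} ≤ R((Λ·X₁ + (1−Λ)·X₂)·x′, x′) ≤ max{R(X₁·x′, x′), R(X₂·x′, x′)} a.s. -/
open MeasureTheory
open scoped Classical

variable {Ω : Type*} [MeasurableSpace Ω]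

section ProofAux
variable {Ω : Type*} [MeasurableSpace Ω]

/-- Combine two a.e.-classes along a measurable set. -/
lemma exists_combine (μ : Measure Ω) (ξ η : Ω →ₘ[μ] ℝ) (A : Set Ω) (hA : MeasurableSet A) :
    ∃ z : Ω →ₘ[μ] ℝ, ∀ᵐ ω ∂μ, z ω = if ω ∈ A then ξ ω else η ω := by
  refine ⟨AEEqFun.mk (fun ω => if ω ∈ A then ξ ω else η ω)
    ((Measurable.ite hA ξ.stronglyMeasurable.measurable
      η.stronglyMeasurable.measurable).aestronglyMeasurable), ?_⟩
  exact AEEqFun.coeFn_mk _ _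

end ProofAux

/-- **Quasi-affinity of `X ↦ R(X·x', x')` (property (vi)).**  Let `π : L⁰ → L̄⁰`
be regular (REG) and `x' ∈ L⁰`.  For all `X₁, X₂ ∈ L⁰` and all `Λ ∈ L⁰` with
`0 ≤ Λ ≤ 1` a.s.,
`R(X₁·x',x') ∧ R(X₂·x',x') ≤ R((Λ·X₁ + (1−Λ)·X₂)·x', x') ≤ R(X₁·x',x') ∨ R(X₂·x',x')` a.s. -/


theorem stmt11 (μ : Measure Ω) [IsProbabilityMeasure μ]
    (π : (Ω →ₘ[μ] ℝ) → Ω → EReal)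
    (hmeas : ∀ ξ : Ω →ₘ[μ] ℝ, Measurable (π ξ))
    (hnbot : ∀ ξ : Ω →ₘ[μ] ℝ, ∀ᵐ ω ∂μ, π ξ ω ≠ ⊥)
    (hreg : Reg μ π)
    (R : (Ω →ₘ[μ] ℝ) → (Ω →ₘ[μ] ℝ) → Ω → EReal)
    (hR : ∀ Y x' : Ω →ₘ[μ] ℝ, IsAEGLB μ (RFamily μ π Y x') (R Y x'))
    (x' X₁ X₂ lam : Ω →ₘ[μ] ℝ) (hlam : ∀ᵐ ω ∂μ, 0 ≤ lam ω ∧ lam ω ≤ 1) :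
    (∀ᵐ ω ∂μ, min (R (X₁ * x') x' ω) (R (X₂ * x') x' ω) ≤
        R ((lam * X₁ + (1 - lam) * X₂) * x') x' ω) ∧
      (∀ᵐ ω ∂μ, R ((lam * X₁ + (1 - lam) * X₂) * x') x' ω ≤
        max (R (X₁ * x') x' ω) (R (X₂ * x') x' ω)) := by
    classical
  set X : Ω →ₘ[μ] ℝ := lam * X₁ + (1 - lam) * X₂ with hXdef
  set A : Set Ω := {ω | X₁ ω * x' ω ≤ X₂ ω * x' ω} with hAdef
  have hA : MeasurableSet A :=
    measurableSet_le (X₁.stronglyMeasurable.measurable.mul x'.stronglyMeasurable.measurable)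
      (X₂.stronglyMeasurable.measurable.mul x'.stronglyMeasurable.measurable)
  have hXfun : ∀ᵐ ω ∂μ, X ω = lam ω * X₁ ω + (1 - lam ω) * X₂ ω := by
    filter_upwards [AEEqFun.coeFn_add (lam * X₁) ((1 - lam) * X₂),
      AEEqFun.coeFn_mul lam X₁, AEEqFun.coeFn_mul (1 - lam) X₂,
      AEEqFun.coeFn_sub (1 : Ω →ₘ[μ] ℝ) lam, AEEqFun.coeFn_one (β := ℝ)] with ω h1 h2 h3 h4 h5
    simp only [hXdef]
    rw [h1, Pi.add_apply, h2, Pi.mul_apply, h3, Pi.mul_apply, h4, Pi.sub_apply, h5, Pi.one_apply]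
  have hXx' : ∀ᵐ ω ∂μ, (X * x') ω = (lam ω * X₁ ω + (1 - lam ω) * X₂ ω) * x' ω := by
    filter_upwards [AEEqFun.coeFn_mul X x', hXfun] with ω h1 h2
    rw [h1, Pi.mul_apply, h2]
  have hX1x' : ∀ᵐ ω ∂μ, (X₁ * x') ω = X₁ ω * x' ω := by
    filter_upwards [AEEqFun.coeFn_mul X₁ x'] with ω h1; rw [h1, Pi.mul_apply]
  have hX2x' : ∀ᵐ ω ∂μ, (X₂ * x') ω = X₂ ω * x' ω := by
    filter_upwards [AEEqFun.coeFn_mul X₂ x'] with ω h1; rw [h1, Pi.mul_apply]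
  have hcomb : ∀ ξ η : Ω →ₘ[μ] ℝ, ∃ z : Ω →ₘ[μ] ℝ,
      (∀ᵐ ω ∂μ, z ω = if ω ∈ A then ξ ω else η ω) ∧
      (∀ᵐ ω ∂μ, π z ω = if ω ∈ A then π ξ ω else π η ω) := by
    intro ξ η
    obtain ⟨z, hz⟩ := exists_combine μ ξ η A hA
    exact ⟨z, hz, hreg ξ η A hA z hz⟩
  constructor
  · have key := (hR (X * x') x').2 (fun ω => min (R (X₁ * x') x' ω) (R (X₂ * x') x' ω)) ?_
    · exact key
    intro g hg
    obtain ⟨ξ, hξ, rfl⟩ := hg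
    obtain ⟨z₁, hz₁, hπz₁⟩ := hcomb ξ X₁
    obtain ⟨z₂, hz₂, hπz₂⟩ := hcomb X₂ ξ
    have hm1 : π z₁ ∈ RFamily μ π (X₁ * x') x' := by
      refine ⟨z₁, ?_, rfl⟩
      filter_upwards [hX1x', hz₁, hξ, hXx', hlam] with ω e1 ez hle eX hl
      rw [e1, ez]
      by_cases hω : ω ∈ A
      · rw [if_pos hω]
        have hAω : X₁ ω * x' ω ≤ X₂ ω * x' ω := hω
        rw [eX] at hle
        nlinarith [hl.1, hl.2]
      · rw [if_neg hω]
    have hm2 : π z₂ ∈ RFamily μ π (X₂ * x') x' := by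
      refine ⟨z₂, ?_, rfl⟩
      filter_upwards [hX2x', hz₂, hξ, hXx', hlam] with ω e2 ez hle eX hl
      rw [e2, ez]
      by_cases hω : ω ∈ A
      · rw [if_pos hω]
      · rw [if_neg hω]
        have hAω : X₂ ω * x' ω ≤ X₁ ω * x' ω := le_of_not_ge hω
        rw [eX] at hle
        nlinarith [hl.1, hl.2]
    have l1 := (hR (X₁ * x') x').1 _ hm1
    have l2 := (hR (X₂ * x') x').1 _ hm2
    show ∀ᵐ ω ∂μ, _ ≤ π ξ ω
    filter_upwards [l1, l2, hπz₁, hπz₂] with ω l1ω l2ω e1 e2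
    by_cases hω : ω ∈ A
    · rw [e1, if_pos hω] at l1ω
      exact le_trans (min_le_left _ _) l1ω
    · rw [e2, if_neg hω] at l2ω
      exact le_trans (min_le_right _ _) l2ω
  · have stepA : ∀ᵐ ω ∂μ, ω ∈ A → R (X * x') x' ω ≤ R (X₂ * x') x' ω := by
      have key := (hR (X₂ * x') x').2 (fun ω => if ω ∈ A then R (X * x') x' ω else ⊥) ?_
      · filter_upwards [key] with ω hω hmem
        rwa [if_pos hmem] at hω
      intro g hg
      obtain ⟨ξ₂, hξ₂, rfl⟩ := hg
      obtain ⟨z, hz, hπz⟩ := hcomb ξ₂ X₁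
      have hmz : π z ∈ RFamily μ π (X * x') x' := by
        refine ⟨z, ?_, rfl⟩
        filter_upwards [hXx', hz, hξ₂, hX2x', hlam] with ω eX ez hle e2 hl
        rw [eX, ez]
        by_cases hω : ω ∈ A
        · rw [if_pos hω]
          rw [e2] at hle
          have hAω : X₁ ω * x' ω ≤ X₂ ω * x' ω := hω
          nlinarith [hl.1, hl.2]
        · rw [if_neg hω]
          have hAω : X₂ ω * x' ω ≤ X₁ ω * x' ω := le_of_not_ge hω
          nlinarith [hl.1, hl.2]
      have lz := (hR (X * x') x').1 _ hmz
      show ∀ᵐ ω ∂μ, _ ≤ π ξ₂ ω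
      filter_upwards [lz, hπz] with ω lω eω
      by_cases hω : ω ∈ A
      · rw [if_pos hω]; rw [eω, if_pos hω] at lω; exact lω
      · rw [if_neg hω]; exact bot_le
    have stepB : ∀ᵐ ω ∂μ, ω ∉ A → R (X * x') x' ω ≤ R (X₁ * x') x' ω := by
      have key := (hR (X₁ * x') x').2 (fun ω => if ω ∈ A then ⊥ else R (X * x') x' ω) ?_
      · filter_upwards [key] with ω hω hmem
        rwa [if_neg hmem] at hω
      intro g hg
      obtain ⟨ξ₁, hξ₁, rfl⟩ := hg
      obtain ⟨z, hz, hπz⟩ := hcomb X₂ ξ₁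
      have hmz : π z ∈ RFamily μ π (X * x') x' := by
        refine ⟨z, ?_, rfl⟩
        filter_upwards [hXx', hz, hξ₁, hX1x', hlam] with ω eX ez hle e1 hl
        rw [eX, ez]
        by_cases hω : ω ∈ A
        · rw [if_pos hω]
          have hAω : X₁ ω * x' ω ≤ X₂ ω * x' ω := hω
          nlinarith [hl.1, hl.2]
        · rw [if_neg hω]
          rw [e1] at hle
          have hAω : X₂ ω * x' ω ≤ X₁ ω * x' ω := le_of_not_ge hω
          nlinarith [hl.1, hl.2]
      have lz := (hR (X * x') x').1 _ hmz
      show ∀ᵐ ω ∂μ, _ ≤ π ξ₁ ω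
      filter_upwards [lz, hπz] with ω lω eω
      by_cases hω : ω ∈ A
      · rw [if_pos hω]; exact bot_le
      · rw [if_neg hω]; rw [eω, if_neg hω] at lω; exact lω
    filter_upwards [stepA, stepB] with ω ha hb
    by_cases hω : ω ∈ A
    · exact le_trans (ha hω) (le_max_right _ _)
    · exact le_trans (hb hω) (le_max_left _ _)
end

section
/- Let π : L⁰ → L̄⁰ be regular (REG) and x′₁, x′₂ ∈ L⁰. Then the sets {R(Y, x′₁) : Y ∈ L⁰} and {R(Y, x′₂) : Y ∈ L⁰} have the same greatest lower bound in the a.e. order on L̄⁰, namely the greatest lower bound of {π(ξ) : ξ ∈ L⁰}. -/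
open MeasureTheory
open scoped Classical

variable {Ω : Type*} [MeasurableSpace Ω]

/-- **Property (vii): the infimum of `R(·, x')` does not depend on `x'`.**
Let `π : L⁰ → L̄⁰` be regular (REG) and `x'₁, x'₂ ∈ L⁰`.  Then the families
`{R(Y, x'₁) ∣ Y ∈ L⁰}` and `{R(Y, x'₂) ∣ Y ∈ L⁰}` have the same a.e.-greatest
lower bound, namely that of `{π ξ ∣ ξ ∈ L⁰}`. -/
theorem stmt12 (μ : Measure Ω) [IsProbabilityMeasure μ]
    (π : (Ω →ₘ[μ] ℝ) → Ω → EReal)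
    (hmeas : ∀ ξ : Ω →ₘ[μ] ℝ, Measurable (π ξ))
    (hnbot : ∀ ξ : Ω →ₘ[μ] ℝ, ∀ᵐ ω ∂μ, π ξ ω ≠ ⊥)
    (hreg : Reg μ π)
    (R : (Ω →ₘ[μ] ℝ) → (Ω →ₘ[μ] ℝ) → Ω → EReal)
    (hR : ∀ Y x' : Ω →ₘ[μ] ℝ, IsAEGLB μ (RFamily μ π Y x') (R Y x'))
    (x'₁ x'₂ : Ω →ₘ[μ] ℝ) :
    ∀ g : Ω → EReal,
      (IsAEGLB μ {h : Ω → EReal | ∃ Y : Ω →ₘ[μ] ℝ, h = R Y x'₁} g ↔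
        IsAEGLB μ {h : Ω → EReal | ∃ ξ : Ω →ₘ[μ] ℝ, h = π ξ} g) ∧
      (IsAEGLB μ {h : Ω → EReal | ∃ Y : Ω →ₘ[μ] ℝ, h = R Y x'₂} g ↔
        IsAEGLB μ {h : Ω → EReal | ∃ ξ : Ω →ₘ[μ] ℝ, h = π ξ} g) := by
  have key : ∀ (x' : Ω →ₘ[μ] ℝ) (h : Ω → EReal),
      (∀ f ∈ {h : Ω → EReal | ∃ Y : Ω →ₘ[μ] ℝ, h = R Y x'}, AELE μ h f) ↔
      (∀ f ∈ {h : Ω → EReal | ∃ ξ : Ω →ₘ[μ] ℝ, h = π ξ}, AELE μ h f) := by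
    intro x' h
    constructor
    · rintro H f ⟨ξ, rfl⟩
      have hmem : π ξ ∈ RFamily μ π (ξ * x') x' :=
        ⟨ξ, by filter_upwards [AEEqFun.coeFn_mul ξ x'] with ω hω using le_of_eq hω, rfl⟩
      have h1 := (hR (ξ * x') x').1 _ hmem
      have h2 := H _ ⟨ξ * x', rfl⟩
      filter_upwards [h1, h2] with ω a b using le_trans b a
    · rintro H f ⟨Y, rfl⟩
      apply (hR Y x').2
      rintro f ⟨ξ, _, rfl⟩
      exact H _ ⟨ξ, rfl⟩
  have glb_iff : ∀ (x' : Ω →ₘ[μ] ℝ) (g : Ω → EReal),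
      IsAEGLB μ {h : Ω → EReal | ∃ Y : Ω →ₘ[μ] ℝ, h = R Y x'} g ↔
      IsAEGLB μ {h : Ω → EReal | ∃ ξ : Ω →ₘ[μ] ℝ, h = π ξ} g := by
    intro x' g
    constructor
    · rintro ⟨h1, h2⟩
      exact ⟨(key x' g).1 h1, fun h hh => h2 h ((key x' h).2 hh)⟩
    · rintro ⟨h1, h2⟩
      exact ⟨(key x' g).2 h1, fun h hh => h2 h ((key x' h).1 hh)⟩
  exact fun g => ⟨glb_iff x'₁ g, glb_iff x'₂ g⟩
end

section
/- Let R be a commutative topological ring, E a topological R-module (E is a topological space, an R-module, and both addition E × E → E and scalar multiplication R × E → E are continuous), and let e ∈ R be idempotent (e² = e). If C₁, C₂ ⊆ E are open and nonempty, then the set e•C₁ + (1−e)•C₂ := {e·c₁ + (1−e)·c₂ : c₁ ∈ C₁, c₂ ∈ C₂} is open in E. -/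
/-! Writing `c₂ = c₁ + v`, one has `a • c₁ + b • (c₁ + v) = c₁ + b • v` whenever `a + b = 1`,
so the set is the union over `v` of the translates by `b • v` of the open sets `C₁ ∩ (C₂ - v)`. -/

open Set

theorem setOf_smul_add_smul_eq_iUnion {R E : Type*} [Semiring R] [AddCommGroup E] [Module R E]
    {a b : R} (hab : a + b = 1) (C₁ C₂ : Set E) :
    {z : E | ∃ c₁ ∈ C₁, ∃ c₂ ∈ C₂, z = a • c₁ + b • c₂} =
      ⋃ v : E, (· + b • v) '' (C₁ ∩ (· + v) ⁻¹' C₂) := by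
  have shift (c v : E) : a • c + b • (c + v) = c + b • v := by
    rw [smul_add, ← add_assoc, ← add_smul, hab, one_smul]
  ext z
  simp only [mem_ofPred_eq, mem_iUnion, mem_image, mem_inter_iff, mem_preimage]
  constructor
  · rintro ⟨c₁, hc₁, c₂, hc₂, rfl⟩
    refine ⟨c₂ - c₁, c₁, ⟨hc₁, by simpa using hc₂⟩, ?_⟩
    rw [← shift, add_sub_cancel]
  · rintro ⟨v, c, ⟨hc, hcv⟩, rfl⟩
    exact ⟨c, hc, c + v, hcv, (shift c v).symm⟩

theorem isOpen_setOf_smul_add_smul {R E : Type*} [Semiring R] [AddCommGroup E] [Module R E]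
    [TopologicalSpace E] [ContinuousAdd E] {a b : R} (hab : a + b = 1) {C₁ C₂ : Set E}
    (h₁ : IsOpen C₁) (h₂ : IsOpen C₂) :
    IsOpen {z : E | ∃ c₁ ∈ C₁, ∃ c₂ ∈ C₂, z = a • c₁ + b • c₂} := by
  rw [setOf_smul_add_smul_eq_iUnion hab]
  exact isOpen_iUnion fun v =>
    isOpenMap_add_right (b • v) _ (h₁.inter (h₂.preimage (continuous_add_const v)))

theorem stmt13_general {R : Type*} [CommRing R]
    {E : Type*} [AddCommGroup E] [Module R E] [TopologicalSpace E]
    [ContinuousAdd E]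
    (e : R)
    (C₁ C₂ : Set E) (h₁ : IsOpen C₁) (h₂ : IsOpen C₂) :
    IsOpen {z : E | ∃ c₁ ∈ C₁, ∃ c₂ ∈ C₂, z = e • c₁ + (1 - e) • c₂} :=
  isOpen_setOf_smul_add_smul (add_sub_cancel e 1) h₁ h₂

/-- **Openness of idempotent concatenations in a topological module.**
Let `R` be a commutative topological ring, `E` a topological `R`-module
(addition and scalar multiplication are continuous), and `e ∈ R` idempotent.
If `C₁, C₂ ⊆ E` are open and nonempty, then
`e • C₁ + (1 − e) • C₂ = {e • c₁ + (1 − e) • c₂ ∣ c₁ ∈ C₁, c₂ ∈ C₂}` is open. -/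
theorem stmt13 {R : Type*} [CommRing R] [TopologicalSpace R] [IsTopologicalRing R]
    {E : Type*} [AddCommGroup E] [Module R E] [TopologicalSpace E]
    [ContinuousAdd E] [ContinuousSMul R E]
    (e : R) (he : e * e = e)
    (C₁ C₂ : Set E) (h₁ : IsOpen C₁) (h₂ : IsOpen C₂)
    (hne₁ : C₁.Nonempty) (hne₂ : C₂.Nonempty) :
    IsOpen {z : E | ∃ c₁ ∈ C₁, ∃ c₂ ∈ C₂, z = e • c₁ + (1 - e) • c₂} :=
  stmt13_general e C₁ C₂ h₁ h₂
end

section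
/- Let C ⊆ L⁰ be nonempty and satisfy the countable concatenation property (in particular ξ·1_A + η·1_{A^c} ∈ C for all ξ, η ∈ C and A ∈ 𝒢). If x ∈ L⁰ and x ∉ C, then there exists H ∈ 𝒢 with P(H) > 0 such that: (i) there exists ξ ∈ C with x = ξ a.e. on Ω∖H; (ii) for every A ∈ 𝒢 with A ⊆ H and P(A) > 0 there is no ξ ∈ C with x = ξ a.e. on A. Moreover H is, up to null sets, the largest set D ∈ 𝒢 satisfying property (ii). -/
/-!
Call a measurable set good if `x` agrees a.e. on it with some element of `C`. Concatenating
the witnesses of countably many good sets, and filling the rest of `Ω` with a fixed element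
of `C`, shows that good sets are closed under countable unions; in a finite measure space
such a family has an a.e.-largest member `G`, the union of a sequence whose measures tend to
the supremum. Then `H = Gᶜ`: a good subset of `H` of positive measure would enlarge `G`, any
`D` with property (ii) meets `G` in a null set, and `μ H = 0` would put `x` in `C`.
-/

open MeasureTheory

variable {Ω : Type*} [MeasurableSpace Ω]

theorem exists_ae_maximal_of_iUnion_mem {μ : Measure Ω} [IsFiniteMeasure μ] {S : Set (Set Ω)}
    (hS : ∀ s ∈ S, MeasurableSet s) (hne : S.Nonempty)
    (hU : ∀ B : ℕ → Set Ω, (∀ n, B n ∈ S) → ⋃ n, B n ∈ S) :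
    ∃ G ∈ S, ∀ s ∈ S, μ (s \ G) = 0 := by
  obtain ⟨u, -, hu_lim, hu_mem⟩ := exists_seq_tendsto_sSup (hne.image μ) (OrderTop.bddAbove _)
  choose B hBS hBμ using hu_mem
  have hGS : ⋃ n, B n ∈ S := hU B hBS
  refine ⟨⋃ n, B n, hGS, fun s hs => ?_⟩
  have hunion : s ∪ ⋃ n, B n ∈ S := by
    have h := hU (fun | 0 => s | _ + 1 => ⋃ n, B n) (by rintro (_ | _) <;> assumption)
    rwa [← Set.union_iUnion_nat_succ, Set.iUnion_const] at h
  have hsup : sSup (μ '' S) ≤ μ (⋃ n, B n) :=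
    le_of_tendsto' hu_lim fun n => hBμ n ▸ measure_mono (Set.subset_iUnion B n)
  rw [← Set.union_sdiff_right, measure_sdiff Set.subset_union_right
    (hS _ hGS).nullMeasurableSet (measure_ne_top μ _)]
  exact tsub_eq_zero_of_le ((le_sSup (Set.mem_image_of_mem μ hunion)).trans hsup)

def AgreesOn (μ : Measure Ω) (C : Set (Ω →ₘ[μ] ℝ)) (x : Ω →ₘ[μ] ℝ) (s : Set Ω) : Prop :=
  ∃ ξ ∈ C, ∀ᵐ ω ∂μ, ω ∈ s → x ω = ξ ω

section

variable {μ : Measure Ω} {C : Set (Ω →ₘ[μ] ℝ)}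

theorem CSet.mem_of_iUnion_eq_univ (hcc : CSet μ C) {B : ℕ → Set Ω}
    (hB : ∀ n, MeasurableSet (B n)) (hcov : ⋃ n, B n = Set.univ)
    {ξ : ℕ → Ω →ₘ[μ] ℝ} (hξ : ∀ n, ξ n ∈ C) {z : Ω →ₘ[μ] ℝ}
    (hz : ∀ n, ∀ᵐ ω ∂μ, ω ∈ B n → z ω = ξ n ω) : z ∈ C :=
  hcc (disjointed B) (MeasurableSet.disjointed hB) (disjoint_disjointed B)
    (iUnion_disjointed.trans hcov) ξ hξ z fun n => by
      filter_upwards [hz n] with ω h hω using h (disjointed_subset B n hω)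

variable {x : Ω →ₘ[μ] ℝ}

theorem AgreesOn.mono {s t : Set Ω} (h : AgreesOn μ C x t) (hst : s ⊆ t) :
    AgreesOn μ C x s := by
  obtain ⟨ξ, hξC, hξ⟩ := h
  exact ⟨ξ, hξC, by filter_upwards [hξ] with ω h hω using h (hst hω)⟩

theorem agreesOn_iUnion (hne : C.Nonempty) (hcc : CSet μ C) {B : ℕ → Set Ω}
    (hB : ∀ n, MeasurableSet (B n)) (hx : ∀ n, AgreesOn μ C x (B n)) :
    AgreesOn μ C x (⋃ n, B n) := by
  classical
  obtain ⟨ξ₀, hξ₀⟩ := hne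
  choose ξ hξC hξ using hx
  set U := ⋃ n, B n
  have hU : MeasurableSet U := MeasurableSet.iUnion hB
  -- glue `x` on `U` with `ξ₀` off `U`; on each `B n` this is `ξ n`
  have hm : AEStronglyMeasurable (U.piecewise x ξ₀) μ :=
    .piecewise hU x.aestronglyMeasurable.restrict ξ₀.aestronglyMeasurable.restrict
  set z := AEEqFun.mk _ hm
  have hz : z =ᵐ[μ] U.piecewise x ξ₀ := AEEqFun.coeFn_mk _ hm
  refine ⟨z, ?_, ?_⟩
  · refine hcc.mem_of_iUnion_eq_univ (B := fun | 0 => Uᶜ | n + 1 => B n)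
      (ξ := fun | 0 => ξ₀ | n + 1 => ξ n) (by rintro (_ | n); exacts [hU.compl, hB n])
      (by rw [← Set.union_iUnion_nat_succ]; exact Set.compl_union_self U)
      (by rintro (_ | n); exacts [hξ₀, hξC n]) ?_
    rintro (_ | n)
    · filter_upwards [hz] with ω h hω
      rw [h, Set.piecewise_eq_of_notMem _ _ _ hω]
    · filter_upwards [hz, hξ n] with ω h hξω hω
      rw [h, Set.piecewise_eq_of_mem _ _ _ (Set.mem_iUnion_of_mem n hω), hξω hω]
  · filter_upwards [hz] with ω h hω
    rw [h, Set.piecewise_eq_of_mem _ _ _ hω]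

end

/-- **Hereditarily disjoint stratification (Guo's lemma, `L⁰` instance).**
Let `C ⊆ L⁰` be nonempty with the countable concatenation property, and let
`x ∉ C`.  Then there exists `H ∈ 𝒢` with `μ H > 0` such that (i) `x` agrees a.e.
on `Ω ∖ H` with some `ξ ∈ C`; (ii) `x` is locally separated from `C` on `H`;
and `H` is, up to null sets, the largest set with property (ii). -/
theorem stmt14 (μ : Measure Ω) [IsProbabilityMeasure μ]
    (C : Set (Ω →ₘ[μ] ℝ)) (hne : C.Nonempty) (hcc : CSet μ C)
    (x : Ω →ₘ[μ] ℝ) (hx : x ∉ C) :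
    ∃ H : Set Ω, MeasurableSet H ∧ 0 < μ H ∧
      (∃ ξ ∈ C, ∀ᵐ ω ∂μ, ω ∉ H → x ω = ξ ω) ∧
      LocOutside μ C x H ∧
      ∀ D : Set Ω, MeasurableSet D → LocOutside μ C x D → μ (D \ H) = 0 := by
  obtain ⟨G, ⟨hG, hxG⟩, hGmax⟩ := exists_ae_maximal_of_iUnion_mem (μ := μ)
    (S := {s | MeasurableSet s ∧ AgreesOn μ C x s}) (fun s hs => hs.1)
    ⟨∅, .empty, hne.elim fun ξ hξ => ⟨ξ, hξ, by simp⟩⟩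
    (fun B hB => ⟨.iUnion fun n => (hB n).1, agreesOn_iUnion hne hcc (fun n => (hB n).1)
      fun n => (hB n).2⟩)
  have ⟨ξ, hξC, hξ⟩ := hxG
  refine ⟨Gᶜ, hG.compl, pos_iff_ne_zero.2 fun h0 => hx ?_, ⟨ξ, hξC, by simpa using hξ⟩, ?_, ?_⟩
  · have hxξ : x =ᵐ[μ] ξ := by
      filter_upwards [hξ, measure_eq_zero_iff_ae_notMem.1 h0] with ω h hω
      exact h (not_not.1 hω)
    rwa [AEEqFun.ext hxξ]
  · rintro B hB hBG hBpos hxB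
    have := hGmax B ⟨hB, hxB⟩
    rw [sdiff_eq_left.2 (Set.subset_compl_iff_disjoint_right.1 hBG)] at this
    exact hBpos.ne' this
  · intro D hD hDout
    by_contra h
    exact hDout _ (hD.diff hG.compl) Set.sdiff_subset (pos_iff_ne_zero.2 h)
      (hxG.mono fun ω hω => not_not.1 hω.2)
end
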